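/- arXiv:2512.14518 — 8 statements merged into one kernel-verified Lean document; each statement's English description precedes it below -/
import Mathlib

section
/- Let S be a finite set of points in ℝ² such that for any two distinct points p, q ∈ S there exists a third point r ∈ S with r ≠ p, r ≠ q, and p, q, r collinear. Then all points of S are collinear. -/
local notation "E2" => EuclideanSpace ℝ (Fin 2)

/-- cross product of two planar vectors -/
def crSG (x y : E2) : ℝ := x 0 * y 1 - x 1 * y 0

lemma depSG {x y : E2} (hx : x ≠ 0) (hxy : crSG x y = 0) : ∃ t : ℝ, y = t • x := by
  unfold crSG at hxy
  have hx' : x 0 ≠ 0 ∨ x 1 ≠ 0 := by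
    by_contra hc
    push_neg at hc
    apply hx
    ext i
    fin_cases i <;> simp [hc.1, hc.2]
  rcases hx' with h0 | h1
  · refine ⟨y 0 / x 0, ?_⟩
    ext i
    fin_cases i <;> simp <;> field_simp <;> linarith [hxy]
  · refine ⟨y 1 / x 1, ?_⟩
    ext i
    fin_cases i <;> simp <;> field_simp <;> linarith [hxy]

lemma collinearSG {p q r : E2} :
    Collinear ℝ ({p, q, r} : Set E2) ↔ crSG (q - p) (r - p) = 0 := by
  constructor
  · intro hc
    rw [collinear_iff_of_mem (Set.mem_insert p _)] at hc
    obtain ⟨v, hv⟩ := hc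
    obtain ⟨s, hs⟩ := hv q (by simp)
    obtain ⟨t, ht⟩ := hv r (by simp)
    have hq : q - p = s • v := by rw [hs]; abel_nf; simp
    have hr : r - p = t • v := by rw [ht]; abel_nf; simp
    rw [hq, hr]
    unfold crSG
    simp
    ring
  · intro hc
    by_cases hqp : q = p
    · have he : ({p, q, r} : Set E2) = {p, r} := by rw [hqp]; ext x; simp
      rw [he]
      exact collinear_pair ℝ p r
    · obtain ⟨t, ht⟩ := depSG (sub_ne_zero.mpr hqp) hc
      rw [collinear_iff_of_mem (Set.mem_insert p _)]
      refine ⟨q - p, ?_⟩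
      intro x hx
      rcases hx with rfl | rfl | rfl
      · exact ⟨0, by simp⟩
      · exact ⟨1, by simp⟩
      · refine ⟨t, ?_⟩
        have : x = t • (q - p) + p := by rw [← ht]; abel
        simpa using this

lemma pairSG {u v t0 : ℝ} (h : (t0 ≤ u ∧ t0 ≤ v) ∨ (u ≤ t0 ∧ v ≤ t0)) :
    (v - u)^2 ≤ (v - t0)^2 ∨ (u - v)^2 ≤ (u - t0)^2 := by
  rcases h with ⟨h1, h2⟩ | ⟨h1, h2⟩ <;> rcases le_total u v with h' | h'
  · left; nlinarith
  · right; nlinarith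
  · right; nlinarith
  · left; nlinarith

lemma pigeonSG {x y z : ℝ} (t0 : ℝ) (hxy : x ≠ y) (hxz : x ≠ z) (hyz : y ≠ z) :
    ∃ s₁ s₂ : ℝ, s₁ ∈ ({x, y, z} : Set ℝ) ∧ s₂ ∈ ({x, y, z} : Set ℝ) ∧ s₁ ≠ s₂ ∧
      (s₂ - s₁)^2 ≤ (s₂ - t0)^2 := by
  have key : ∃ u v : ℝ, u ∈ ({x, y, z} : Set ℝ) ∧ v ∈ ({x, y, z} : Set ℝ) ∧ u ≠ v ∧
      ((t0 ≤ u ∧ t0 ≤ v) ∨ (u ≤ t0 ∧ v ≤ t0)) := by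
    by_cases hx : t0 ≤ x <;> by_cases hy : t0 ≤ y <;> by_cases hz : t0 ≤ z
    · exact ⟨x, y, by simp, by simp, hxy, Or.inl ⟨hx, hy⟩⟩
    · exact ⟨x, y, by simp, by simp, hxy, Or.inl ⟨hx, hy⟩⟩
    · exact ⟨x, z, by simp, by simp, hxz, Or.inl ⟨hx, hz⟩⟩
    · exact ⟨y, z, by simp, by simp, hyz, Or.inr ⟨le_of_not_ge hy, le_of_not_ge hz⟩⟩
    · exact ⟨y, z, by simp, by simp, hyz, Or.inl ⟨hy, hz⟩⟩
    · exact ⟨x, z, by simp, by simp, hxz, Or.inr ⟨le_of_not_ge hx, le_of_not_ge hz⟩⟩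
    · exact ⟨x, y, by simp, by simp, hxy, Or.inr ⟨le_of_not_ge hx, le_of_not_ge hy⟩⟩
    · exact ⟨x, y, by simp, by simp, hxy, Or.inr ⟨le_of_not_ge hx, le_of_not_ge hy⟩⟩
  obtain ⟨u, v, hu, hv, huv, hside⟩ := key
  rcases pairSG hside with hle | hle
  · exact ⟨u, v, hu, hv, huv, hle⟩
  · exact ⟨v, u, hv, hu, huv.symm, hle⟩

/-- squared norm in coordinates -/
def nnSG (x : E2) : ℝ := x 0 ^ 2 + x 1 ^ 2

lemma nnSG_pos {x : E2} (hx : x ≠ 0) : 0 < nnSG x := by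
  have h : x 0 ≠ 0 ∨ x 1 ≠ 0 := by
    by_contra hc
    push_neg at hc
    exact hx (PiLp.ext fun i => by fin_cases i <;> simp [hc.1, hc.2])
  unfold nnSG
  rcases h with h | h <;> positivity

lemma crSG_zero_left {y : E2} : crSG 0 y = 0 := by unfold crSG; simp

theorem sylvester_gallai (S : Set (EuclideanSpace ℝ (Fin 2))) (hS : S.Finite)
    (h : ∀ p ∈ S, ∀ q ∈ S, p ≠ q →
      ∃ r ∈ S, r ≠ p ∧ r ≠ q ∧ Collinear ℝ ({p, q, r} : Set (EuclideanSpace ℝ (Fin 2)))) :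
    Collinear ℝ S := by
  classical
  by_contra hcol
  -- Step 1: there is a non-collinear triple in S
  have hex : ∃ p ∈ S, ∃ a ∈ S, ∃ b ∈ S, crSG (b - a) (p - a) ≠ 0 := by
    by_contra hc
    push_neg at hc
    apply hcol
    rcases S.eq_empty_or_nonempty with rfl | ⟨a, ha⟩
    · exact collinear_empty ℝ _
    by_cases hsub : ∀ x ∈ S, x = a
    · exact (collinear_singleton ℝ a).subset fun x hx => hsub x hx
    push_neg at hsub
    obtain ⟨b, hb, hba⟩ := hsub
    rw [collinear_iff_of_mem ha]
    refine ⟨b - a, fun x hx => ?_⟩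
    obtain ⟨t, ht⟩ := depSG (sub_ne_zero.mpr hba) (hc x hx a ha b hb)
    exact ⟨t, by rw [eq_vadd_iff_vsub_eq]; exact ht⟩
  obtain ⟨p₀, hp₀S, a₀, ha₀S, b₀, hb₀S, h₀⟩ := hex
  -- Step 2: minimize (cross)^2 / |direction|^2 over non-collinear triples
  set F := hS.toFinset with hF
  let T : Finset (E2 × E2 × E2) :=
    (F ×ˢ F ×ˢ F).filter (fun z => crSG (z.2.2 - z.2.1) (z.1 - z.2.1) ≠ 0)
  let f : E2 × E2 × E2 → ℝ :=
    fun z => (crSG (z.2.2 - z.2.1) (z.1 - z.2.1)) ^ 2 / nnSG (z.2.2 - z.2.1)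
  have hmemT : ∀ z : E2 × E2 × E2, z ∈ T ↔
      (z.1 ∈ S ∧ z.2.1 ∈ S ∧ z.2.2 ∈ S) ∧ crSG (z.2.2 - z.2.1) (z.1 - z.2.1) ≠ 0 := by
    intro z
    simp [T, Finset.mem_filter, Finset.mem_product, hF, Set.Finite.mem_toFinset, and_assoc]
  have hTne : T.Nonempty := ⟨(p₀, a₀, b₀), (hmemT _).mpr ⟨⟨hp₀S, ha₀S, hb₀S⟩, h₀⟩⟩
  obtain ⟨m, hmT, hmin⟩ := T.exists_min_image f hTne
  obtain ⟨P, A, B⟩ := m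
  rw [hmemT] at hmT
  obtain ⟨⟨hPS, hAS, hBS⟩, hC⟩ := hmT
  simp only at hC hmin
  set w : E2 := B - A with hw
  set q : E2 := P - A with hq
  have hwne : w ≠ 0 := fun h0 => hC (by rw [h0]; exact crSG_zero_left)
  have hAB : A ≠ B := fun hab => hwne (by rw [hw, hab, sub_self])
  -- Step 3: third point on line AB
  obtain ⟨c, hcS, hcA, hcB, hcol3⟩ := h A hAS B hBS hAB
  rw [collinearSG] at hcol3
  obtain ⟨t, ht⟩ := depSG hwne hcol3
  have ht0 : t ≠ 0 := by
    rintro rfl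
    apply hcA
    have : c - A = 0 := by rw [ht]; simp
    exact sub_eq_zero.mp this
  have ht1 : t ≠ 1 := by
    rintro rfl
    apply hcB
    have : c - A = B - A := by rw [ht, one_smul]
    exact sub_left_inj.mp this
  -- Step 4: pigeonhole on parameters 0, 1, t
  have hNw : 0 < nnSG w := nnSG_pos hwne
  set ip : ℝ := w 0 * q 0 + w 1 * q 1 with hip
  obtain ⟨s₁, s₂, hs₁, hs₂, hne, hkey⟩ :=
    pigeonSG (x := (0:ℝ)) (y := 1) (z := t) (ip / nnSG w) (by norm_num) (Ne.symm ht0) (Ne.symm ht1)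
  -- Step 5: the two chosen points lie in S
  have hpts : ∀ s : ℝ, s ∈ ({0, 1, t} : Set ℝ) → A + s • w ∈ S := by
    intro s hs
    rcases hs with rfl | rfl | hst
    · simpa using hAS
    · have he : A + (1:ℝ) • w = B := by rw [one_smul, hw]; abel
      rwa [he]
    · rw [hst]
      have he : A + t • w = c := by rw [← ht]; abel
      rwa [he]
  set P₁ : E2 := A + s₁ • w with hP₁
  set P₂ : E2 := A + s₂ • w with hP₂
  have hP₁S : P₁ ∈ S := hpts s₁ hs₁
  have hP₂S : P₂ ∈ S := hpts s₂ hs₂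
  -- Step 6: new configuration (P₁, P, P₂)
  have hcoord : ∀ i : Fin 2, (P₂ - P) i = s₂ * w i - q i := by
    intro i
    simp [hP₂, hq]
    ring
  have hcoord1 : ∀ i : Fin 2, (P₁ - P) i = s₁ * w i - q i := by
    intro i
    simp [hP₁, hq]
    ring
  have hcr' : crSG (P₂ - P) (P₁ - P) = (s₁ - s₂) * crSG w q := by
    unfold crSG
    rw [hcoord 0, hcoord 1, hcoord1 0, hcoord1 1]
    ring
  have hcr'ne : crSG (P₂ - P) (P₁ - P) ≠ 0 := by
    rw [hcr']
    exact mul_ne_zero (sub_ne_zero.mpr hne) hC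
  have hT' : (P₁, P, P₂) ∈ T := (hmemT _).mpr ⟨⟨hP₁S, hPS, hP₂S⟩, hcr'ne⟩
  have hle := hmin (P₁, P, P₂) hT'
  simp only [f] at hle
  -- Step 7: contradiction via the strict inequality
  have hP₂Pne : P₂ - P ≠ 0 := fun h0 => hcr'ne (by rw [h0]; exact crSG_zero_left)
  have hNnew : 0 < nnSG (P₂ - P) := nnSG_pos hP₂Pne
  have hnn : nnSG (P₂ - P) = (s₂ * w 0 - q 0) ^ 2 + (s₂ * w 1 - q 1) ^ 2 := by
    unfold nnSG
    rw [hcoord 0, hcoord 1]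
  -- scaled key inequality
  have hkey2 : (s₂ - s₁) ^ 2 * nnSG w ^ 2 ≤ (s₂ * nnSG w - ip) ^ 2 := by
    have e : (s₂ - ip / nnSG w) * nnSG w = s₂ * nnSG w - ip := by
      field_simp
    calc (s₂ - s₁) ^ 2 * nnSG w ^ 2 ≤ (s₂ - ip / nnSG w) ^ 2 * nnSG w ^ 2 := by
          nlinarith [sq_nonneg (nnSG w)]
      _ = ((s₂ - ip / nnSG w) * nnSG w) ^ 2 := by ring
      _ = (s₂ * nnSG w - ip) ^ 2 := by rw [e]
  have hlag : nnSG w * nnSG (P₂ - P) = (s₂ * nnSG w - ip) ^ 2 + (crSG w q) ^ 2 := by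
    rw [hnn]
    unfold nnSG crSG
    rw [hip]
    ring
  have hC2 : 0 < (crSG w q) ^ 2 := by positivity
  have hstrict : (crSG (P₂ - P) (P₁ - P)) ^ 2 / nnSG (P₂ - P) < (crSG w q) ^ 2 / nnSG w := by
    rw [div_lt_div_iff₀ hNnew hNw, hcr']
    nlinarith [hkey2, hlag, hC2, hNw, hNnew, sq_nonneg (s₂ * nnSG w - ip)]
  have : (crSG w q) ^ 2 / nnSG w ≤ (crSG (P₂ - P) (P₁ - P)) ^ 2 / nnSG (P₂ - P) := by
    simpa [hw, hq] using hle
  linarith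
end

section
/- Let d ≥ 2 and let S be a finite set of points in ℝ^d that is not collinear. Then there exists an ordinary line for S, i.e. an affine line L in ℝ^d such that L ∩ S consists of exactly two points. -/
open scoped RealInnerProductSpace

/-- Auxiliary: among three distinct reals, two have the same (weak) sign; we can pick them
ordered by absolute value. -/
lemma sg_aux_three (r₁ r₂ r₃ : ℝ) (h12 : r₁ ≠ r₂) (h13 : r₁ ≠ r₃) (h23 : r₂ ≠ r₃) :
    ∃ s t : ℝ, s ∈ ({r₁, r₂, r₃} : Set ℝ) ∧ t ∈ ({r₁, r₂, r₃} : Set ℝ) ∧ s ≠ t ∧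
      0 ≤ s * t ∧ |s| ≤ |t| := by
  have pick : ∀ a b : ℝ, a ∈ ({r₁, r₂, r₃} : Set ℝ) → b ∈ ({r₁, r₂, r₃} : Set ℝ) →
      a ≠ b → 0 ≤ a * b →
      ∃ s t : ℝ, s ∈ ({r₁, r₂, r₃} : Set ℝ) ∧ t ∈ ({r₁, r₂, r₃} : Set ℝ) ∧ s ≠ t ∧
        0 ≤ s * t ∧ |s| ≤ |t| := by
    intro a b ha hb hne hab
    rcases le_total |a| |b| with h | h
    · exact ⟨a, b, ha, hb, hne, hab, h⟩
    · exact ⟨b, a, hb, ha, hne.symm, by linarith [mul_comm a b], h⟩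
  rcases le_or_gt 0 (r₁ * r₂) with h | h
  · exact pick r₁ r₂ (by simp) (by simp) h12 h
  rcases le_or_gt 0 (r₁ * r₃) with h' | h'
  · exact pick r₁ r₃ (by simp) (by simp) h13 h'
  rcases le_or_gt 0 (r₂ * r₃) with h'' | h''
  · exact pick r₂ r₃ (by simp) (by simp) h23 h''
  · exfalso
    have hpos := mul_pos (mul_pos (neg_pos.2 h) (neg_pos.2 h')) (neg_pos.2 h'')
    nlinarith [sq_nonneg (r₁ * r₂ * r₃)]

/-- Kelly's descent step: if `f` is the foot of the perpendicular from `p` to a line through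
`f` with direction `v`, and `x = f + s • v`, `y = f + t • v` with `s, t` of the same sign and
`|s| ≤ |t|`, then some point on the line through `p` and `y` is strictly closer to `x` than
`dist p f`. -/
lemma sg_descent {E : Type*} [NormedAddCommGroup E] [InnerProductSpace ℝ E]
    {p f v : E} {s t : ℝ} (horth : ⟪p - f, v⟫ = 0) (hpf : p ≠ f)
    (hsign : 0 ≤ s * t) (habs : |s| ≤ |t|) :
    ∃ c : ℝ, dist (f + s • v) ((f + t • v) + c • (p - (f + t • v))) < dist p f := by
  set u := p - f with hu
  have hu0 : u ≠ 0 := sub_ne_zero.2 hpf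
  set V := ‖v‖ ^ 2 with hV
  set h2 := ‖u‖ ^ 2 with hh
  have hh2 : 0 < h2 := by
    rw [hh]; exact pow_pos (norm_pos_iff.mpr hu0) 2
  have hV0 : 0 ≤ V := sq_nonneg _
  set D := h2 + t ^ 2 * V with hD
  have hDpos : 0 < D := by
    have : 0 ≤ t ^ 2 * V := by positivity
    linarith
  set c := (t - s) * t * V / D with hc
  refine ⟨c, ?_⟩
  set α := (s - t) + c * t with hα
  have hxz : (f + s • v) - ((f + t • v) + c • (p - (f + t • v))) = α • v + (-c) • u := by
    rw [hα, hu]; module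
  have hcD : c * D = (t - s) * t * V := by
    rw [hc]; field_simp
  have hαD : α * D = (s - t) * h2 := by
    have e : α * D = (s - t) * D + (c * D) * t := by rw [hα]; ring
    rw [e, hcD, hD]; ring
  have hinner : ⟪α • v, (-c) • u⟫ = 0 := by
    rw [real_inner_smul_left, real_inner_smul_right, real_inner_comm, horth]
    ring
  have hnorm : ‖α • v + (-c) • u‖ ^ 2 = α ^ 2 * V + c ^ 2 * h2 := by
    rw [norm_add_sq_real, hinner, norm_smul, norm_smul, mul_pow, mul_pow,
      Real.norm_eq_abs, Real.norm_eq_abs, sq_abs, sq_abs, neg_sq, hV, hh]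
    ring
  have hst2 : (s - t) ^ 2 ≤ t ^ 2 := by
    have e1 : s ^ 2 ≤ |s| * |t| := by
      rw [← sq_abs s, sq]
      exact mul_le_mul_of_nonneg_left habs (abs_nonneg s)
    have e2 : |s| * |t| = s * t := by rw [← abs_mul, abs_of_nonneg hsign]
    nlinarith
  have key : (s - t) ^ 2 * V < D := by
    have h1 : (s - t) ^ 2 * V ≤ t ^ 2 * V := mul_le_mul_of_nonneg_right hst2 hV0
    rw [hD]; linarith
  have hfin : α ^ 2 * V + c ^ 2 * h2 < h2 := by
    have hDD : (0 : ℝ) < D ^ 2 := by positivity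
    rw [← mul_lt_mul_iff_of_pos_right hDD]
    have e3 : (α ^ 2 * V + c ^ 2 * h2) * D ^ 2 = (α * D) ^ 2 * V + (c * D) ^ 2 * h2 := by ring
    rw [e3, hαD, hcD]
    have e4 : ((s - t) * h2) ^ 2 * V + ((t - s) * t * V) ^ 2 * h2
        = ((s - t) ^ 2 * V) * h2 * D := by rw [hD]; ring
    rw [e4]
    calc ((s - t) ^ 2 * V) * h2 * D < D * h2 * D :=
          mul_lt_mul_of_pos_right (mul_lt_mul_of_pos_right key hh2) hDpos
      _ = h2 * D ^ 2 := by ring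
  rw [dist_eq_norm, dist_eq_norm, hxz, ← hu]
  refine lt_of_pow_lt_pow_left₀ 2 (norm_nonneg u) ?_
  calc ‖α • v + (-c) • u‖ ^ 2 = α ^ 2 * V + c ^ 2 * h2 := hnorm
    _ < h2 := hfin
    _ = ‖u‖ ^ 2 := hh.symm

/-- An affine line: an affine subspace whose direction is one-dimensional. -/
def IsLine {d : ℕ} (L : AffineSubspace ℝ (EuclideanSpace ℝ (Fin d))) : Prop :=
  Module.finrank ℝ L.direction = 1

theorem sylvester_gallai_high_dim (d : ℕ) (hd : 2 ≤ d)
    (S : Set (EuclideanSpace ℝ (Fin d))) (hS : S.Finite)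
    (hncol : ¬ Collinear ℝ S) :
    ∃ L : AffineSubspace ℝ (EuclideanSpace ℝ (Fin d)), IsLine L ∧
      ∃ p q, p ≠ q ∧ (L : Set (EuclideanSpace ℝ (Fin d))) ∩ S = {p, q} := by
  classical
  -- Step 1: find a non-degenerate triple
  have hSne : S.Nonempty := by
    rcases S.eq_empty_or_nonempty with rfl | h
    · exact absurd (collinear_empty ℝ (EuclideanSpace ℝ (Fin d))) hncol
    · exact h
  obtain ⟨a₀, ha₀S⟩ := hSne
  have hex_b : ∃ b₀ ∈ S, b₀ ≠ a₀ := by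
    by_contra h
    push_neg at h
    have hsub : S ⊆ {a₀} := fun x hx => h x hx
    exact hncol (Collinear.subset hsub (collinear_singleton ℝ a₀))
  obtain ⟨b₀, hb₀S, hb₀⟩ := hex_b
  have hex_c : ∃ c₀ ∈ S, c₀ ∉ affineSpan ℝ ({a₀, b₀} : Set (EuclideanSpace ℝ (Fin d))) := by
    by_contra h
    push_neg at h
    have hsub : S ⊆ (affineSpan ℝ ({a₀, b₀} : Set (EuclideanSpace ℝ (Fin d))) : Set (EuclideanSpace ℝ (Fin d))) := h
    have h1 : vectorSpan ℝ S ≤ vectorSpan ℝ ({a₀, b₀} : Set (EuclideanSpace ℝ (Fin d))) := by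
      calc vectorSpan ℝ S ≤ vectorSpan ℝ ((affineSpan ℝ ({a₀, b₀} : Set (EuclideanSpace ℝ (Fin d))) : Set (EuclideanSpace ℝ (Fin d)))) :=
            vectorSpan_mono ℝ hsub
        _ = (affineSpan ℝ ({a₀, b₀} : Set (EuclideanSpace ℝ (Fin d)))).direction := rfl
        _ = vectorSpan ℝ ({a₀, b₀} : Set (EuclideanSpace ℝ (Fin d))) := direction_affineSpan ℝ _
    refine hncol ?_
    rw [collinear_iff_rank_le_one]
    exact le_trans (Submodule.rank_mono h1) (collinear_pair ℝ a₀ b₀)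
  obtain ⟨c₀, hc₀S, hc₀⟩ := hex_c
  -- Step 2: minimize point-line distance over all admissible triples
  set T : Set (EuclideanSpace ℝ (Fin d) × EuclideanSpace ℝ (Fin d) × EuclideanSpace ℝ (Fin d)) := {q | q.1 ∈ S ∧ q.2.1 ∈ S ∧ q.2.2 ∈ S ∧ q.2.1 ≠ q.2.2 ∧
    q.1 ∉ affineSpan ℝ ({q.2.1, q.2.2} : Set (EuclideanSpace ℝ (Fin d)))} with hT
  have hTfin : T.Finite :=
    (hS.prod (hS.prod hS)).subset (fun q hq => ⟨hq.1, hq.2.1, hq.2.2.1⟩)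
  have hq₀ : (c₀, a₀, b₀) ∈ hTfin.toFinset :=
    hTfin.mem_toFinset.2 ⟨hc₀S, ha₀S, hb₀S, hb₀.symm, hc₀⟩
  obtain ⟨q, hqF, hmin⟩ := hTfin.toFinset.exists_min_image
    (fun q => Metric.infDist q.1 ((affineSpan ℝ ({q.2.1, q.2.2} : Set (EuclideanSpace ℝ (Fin d))) : AffineSubspace ℝ (EuclideanSpace ℝ (Fin d))) : Set (EuclideanSpace ℝ (Fin d))))
    ⟨_, hq₀⟩
  obtain ⟨p, a, b⟩ := q
  obtain ⟨hpS, haS, hbS, hab, hpl⟩ := hTfin.mem_toFinset.1 hqF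
  simp only at hpS haS hbS hab hpl hmin
  set ℓ : AffineSubspace ℝ (EuclideanSpace ℝ (Fin d)) := affineSpan ℝ ({a, b} : Set (EuclideanSpace ℝ (Fin d))) with hℓ
  set v : EuclideanSpace ℝ (Fin d) := b - a with hv
  have hv0 : v ≠ 0 := sub_ne_zero.2 (Ne.symm hab)
  have hdir : ℓ.direction = ℝ ∙ v := by
    rw [hℓ, direction_affineSpan, vectorSpan_pair_rev]
    norm_num [hv]
  have haℓ : a ∈ ℓ := mem_affineSpan ℝ (Set.mem_insert _ _)
  have hbℓ : b ∈ ℓ := mem_affineSpan ℝ (Set.mem_insert_of_mem _ rfl)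
  have hvdir : v ∈ ℓ.direction := by
    rw [hdir]; exact Submodule.mem_span_singleton_self _
  -- the foot of the perpendicular from p to ℓ
  set μ : ℝ := ⟪p - a, v⟫ / ‖v‖ ^ 2 with hμ
  set f : EuclideanSpace ℝ (Fin d) := a + μ • v with hf
  have hfl : f ∈ ℓ := by
    have h1 : (μ • v) +ᵥ a ∈ ℓ :=
      AffineSubspace.vadd_mem_of_mem_direction (Submodule.smul_mem _ μ hvdir) haℓ
    simpa [hf, add_comm] using h1
  have hflin : ∀ r : ℝ, f + r • v ∈ ℓ := by
    intro r
    have h1 : (r • v) +ᵥ f ∈ ℓ :=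
      AffineSubspace.vadd_mem_of_mem_direction (Submodule.smul_mem _ r hvdir) hfl
    simpa [add_comm] using h1
  have hnv : (‖v‖ : ℝ) ^ 2 ≠ 0 := pow_ne_zero 2 (norm_ne_zero_iff.2 hv0)
  have horth : ⟪p - f, v⟫ = 0 := by
    have e : p - f = (p - a) - μ • v := by rw [hf]; abel
    rw [e, inner_sub_left, real_inner_smul_left, real_inner_self_eq_norm_sq, hμ,
      div_mul_cancel₀ _ hnv, sub_self]
  have hpf : p ≠ f := fun h => hpl (h ▸ hfl)
  have hscal : ∀ w ∈ ℓ, ∃ r : ℝ, w = f + r • v := by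
    intro w hw
    have h1 : w -ᵥ f ∈ ℓ.direction := AffineSubspace.vsub_mem_direction hw hfl
    rw [hdir, Submodule.mem_span_singleton] at h1
    obtain ⟨r, hr⟩ := h1
    refine ⟨r, ?_⟩
    have : w - f = r • v := by rw [hr, vsub_eq_sub]
    rw [← this]; abel
  have hfootmin : ∀ w ∈ ℓ, dist p f ≤ dist p w := by
    intro w hw
    obtain ⟨r, hr⟩ := hscal w hw
    have hdecomp : p - w = (p - f) - r • v := by rw [hr]; abel
    have hsq : dist p w ^ 2 = dist p f ^ 2 + r ^ 2 * ‖v‖ ^ 2 := by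
      rw [dist_eq_norm, dist_eq_norm, hdecomp, norm_sub_sq_real, real_inner_smul_right,
        horth, norm_smul, mul_pow, Real.norm_eq_abs, sq_abs]
      ring
    have h2 : dist p f ^ 2 ≤ dist p w ^ 2 := by nlinarith [sq_nonneg r, sq_nonneg ‖v‖]
    exact le_of_pow_le_pow_left₀ two_ne_zero dist_nonneg h2
  have hinfd : dist p f ≤ Metric.infDist p (ℓ : Set (EuclideanSpace ℝ (Fin d))) := by
    by_contra h
    push_neg at h
    rw [Metric.infDist_lt_iff ⟨a, haℓ⟩] at h
    obtain ⟨w, hw, hlt⟩ := h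
    exact absurd hlt (not_lt.2 (hfootmin w hw))
  -- Step 3: the minimizing line is ordinary
  have hclaim : ∀ c' ∈ S, c' ∈ ℓ → c' = a ∨ c' = b := by
    intro c' hc'S hc'ℓ
    by_contra hne
    push_neg at hne
    obtain ⟨hca, hcb⟩ := hne
    obtain ⟨ra, hra⟩ := hscal a haℓ
    obtain ⟨rb, hrb⟩ := hscal b hbℓ
    obtain ⟨rc, hrc⟩ := hscal c' hc'ℓ
    have hinj : ∀ r r' : ℝ, f + r • v = f + r' • v → r = r' := by
      intro r r' h
      have h1 : (r - r') • v = 0 := by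
        have := sub_eq_zero.2 h
        rw [sub_smul]
        calc r • v - r' • v = (f + r • v) - (f + r' • v) := by abel
          _ = 0 := sub_eq_zero.2 h
      rcases smul_eq_zero.1 h1 with h2 | h2
      · linarith [sub_eq_zero.1 (by linarith [h2] : r - r' = 0)]
      · exact absurd h2 hv0
    have hab' : ra ≠ rb := fun h => hab (by rw [hra, hrb, h])
    have hbc' : rb ≠ rc := fun h => hcb (by rw [hrc, hrb, h])
    have hac'' : ra ≠ rc := fun h => hca (by rw [hrc, hra, h])
    obtain ⟨s, t, hs, ht, hst, hsign, habs⟩ := sg_aux_three ra rb rc hab' hac'' hbc'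
    have hpt : ∀ r : ℝ, r ∈ ({ra, rb, rc} : Set ℝ) → ∃ P, P ∈ S ∧ P = f + r • v := by
      intro r hr
      simp only [Set.mem_insert_iff, Set.mem_singleton_iff] at hr
      rcases hr with rfl | rfl | rfl
      exacts [⟨a, haS, hra⟩, ⟨b, hbS, hrb⟩, ⟨c', hc'S, hrc⟩]
    obtain ⟨x, hxS, hx⟩ := hpt s hs
    obtain ⟨y, hyS, hy⟩ := hpt t ht
    have hxy : x ≠ y := fun h => hst (hinj s t (by rw [← hx, ← hy, h]))
    have hxℓ : x ∈ ℓ := hx ▸ hflin s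
    have hyℓ : y ∈ ℓ := hy ▸ hflin t
    have hpy : p ≠ y := fun h => hpl (h ▸ hyℓ)
    set M : AffineSubspace ℝ (EuclideanSpace ℝ (Fin d)) := affineSpan ℝ ({p, y} : Set (EuclideanSpace ℝ (Fin d))) with hM
    have hpM : p ∈ M := mem_affineSpan ℝ (Set.mem_insert _ _)
    have hyM : y ∈ M := mem_affineSpan ℝ (Set.mem_insert_of_mem _ rfl)
    have hxM : x ∉ M := by
      intro hxM
      have hle : affineSpan ℝ ({x, y} : Set (EuclideanSpace ℝ (Fin d))) ≤ M :=
        affineSpan_le.2 (Set.insert_subset hxM (Set.singleton_subset_iff.2 hyM))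
      have hd1 : Module.finrank ℝ (affineSpan ℝ ({x, y} : Set (EuclideanSpace ℝ (Fin d)))).direction = 1 := by
        rw [direction_affineSpan, vectorSpan_pair]
        exact finrank_span_singleton (vsub_ne_zero.2 hxy)
      have hd2 : Module.finrank ℝ M.direction = 1 := by
        rw [hM, direction_affineSpan, vectorSpan_pair]
        exact finrank_span_singleton (vsub_ne_zero.2 hpy)
      have hdeq : (affineSpan ℝ ({x, y} : Set (EuclideanSpace ℝ (Fin d)))).direction = M.direction :=
        Submodule.eq_of_le_of_finrank_eq (AffineSubspace.direction_le hle) (by rw [hd1, hd2])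
      have heq : affineSpan ℝ ({x, y} : Set (EuclideanSpace ℝ (Fin d))) = M :=
        AffineSubspace.ext_of_direction_eq hdeq
          ⟨y, mem_affineSpan ℝ (Set.mem_insert_of_mem _ rfl), hyM⟩
      have hpxy : p ∈ affineSpan ℝ ({x, y} : Set (EuclideanSpace ℝ (Fin d))) := heq ▸ hpM
      have hxyℓ : affineSpan ℝ ({x, y} : Set (EuclideanSpace ℝ (Fin d))) ≤ ℓ :=
        affineSpan_le.2 (Set.insert_subset hxℓ (Set.singleton_subset_iff.2 hyℓ))
      exact hpl (hxyℓ hpxy)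
    -- descent step
    obtain ⟨cc, hlt⟩ := sg_descent horth hpf hsign habs
    rw [← hx, ← hy] at hlt
    set z : EuclideanSpace ℝ (Fin d) := y + cc • (p - y) with hz
    have hzM : z ∈ M := by
      have h1 := M.smul_vsub_vadd_mem cc hpM hyM hyM
      simpa [hz, add_comm] using h1
    have h1 : Metric.infDist x (M : Set (EuclideanSpace ℝ (Fin d))) ≤ dist x z := Metric.infDist_le_dist_of_mem hzM
    have h2 : Metric.infDist x (M : Set (EuclideanSpace ℝ (Fin d))) < Metric.infDist p (ℓ : Set (EuclideanSpace ℝ (Fin d))) :=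
      lt_of_le_of_lt h1 (lt_of_lt_of_le hlt hinfd)
    have hq' : (x, p, y) ∈ hTfin.toFinset :=
      hTfin.mem_toFinset.2 ⟨hxS, hpS, hyS, hpy, hxM⟩
    have h3 := hmin (x, p, y) hq'
    simp only at h3
    exact absurd h2 (not_lt.2 h3)
  refine ⟨ℓ, ?_, a, b, hab, ?_⟩
  · show Module.finrank ℝ ℓ.direction = 1
    rw [hdir]
    exact finrank_span_singleton hv0
  · ext w
    constructor
    · rintro ⟨hwℓ, hwS⟩
      rcases hclaim w hwS hwℓ with rfl | rfl
      · exact Set.mem_insert _ _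
      · exact Set.mem_insert_of_mem _ rfl
    · rintro (rfl | rfl)
      · exact ⟨haℓ, haS⟩
      · exact ⟨hbℓ, hbS⟩
end

section
/- For k = 1, …, 6 let u_k = (cos((k−1)π/3), sin((k−1)π/3)) ∈ ℝ². For all positive integers i, j with i > j, the three points p = (1/(3i−2))·u_1, q = (1/(3j−1))·u_2, and s = (1/(3(i−j)−1))·u_6 are collinear. -/
/-- The unit vector at angle `(k-1)π/3` from the positive x-axis. -/
noncomputable def u (k : ℕ) : EuclideanSpace ℝ (Fin 2) :=
  WithLp.toLp 2 ![Real.cos ((k - 1 : ℝ) * Real.pi / 3), Real.sin ((k - 1 : ℝ) * Real.pi / 3)]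

lemma u1_eq : u 1 = WithLp.toLp 2 ![1, 0] := by
  unfold u
  norm_num

lemma u2_eq : u 2 = WithLp.toLp 2 ![1/2, Real.sqrt 3 / 2] := by
  unfold u
  have h : ((2:ℕ) - 1 : ℝ) * Real.pi / 3 = Real.pi / 3 := by push_cast; ring
  rw [h, Real.cos_pi_div_three, Real.sin_pi_div_three]

lemma u6_eq : u 6 = WithLp.toLp 2 ![1/2, -(Real.sqrt 3 / 2)] := by
  unfold u
  have h : ((6:ℕ) - 1 : ℝ) * Real.pi / 3 = 2 * Real.pi - Real.pi / 3 := by push_cast; ring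
  rw [h, Real.cos_sub, Real.sin_sub, Real.cos_two_pi, Real.sin_two_pi,
    Real.cos_pi_div_three, Real.sin_pi_div_three]
  norm_num

theorem collinear_case_pi_div_three_gt (i j : ℕ) (hi : 1 ≤ i) (hj : 1 ≤ j) (hij : j < i) :
    Collinear ℝ ({(1 / (3 * (i : ℝ) - 2)) • u 1, (1 / (3 * (j : ℝ) - 1)) • u 2,
      (1 / (3 * ((i : ℝ) - (j : ℝ)) - 1)) • u 6} : Set (EuclideanSpace ℝ (Fin 2))) := by
  have hi' : (1:ℝ) ≤ (i:ℝ) := by exact_mod_cast hi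
  have hj' : (1:ℝ) ≤ (j:ℝ) := by exact_mod_cast hj
  have hij' : (j:ℝ) + 1 ≤ (i:ℝ) := by exact_mod_cast hij
  have ha : (3 * (i:ℝ) - 2) ≠ 0 := by nlinarith
  have hb : (3 * (j:ℝ) - 1) ≠ 0 := by nlinarith
  have hc : (3 * ((i:ℝ) - (j:ℝ)) - 1) ≠ 0 := by nlinarith
  set a : ℝ := 1 / (3 * (i:ℝ) - 2) with hA
  set b : ℝ := 1 / (3 * (j:ℝ) - 1) with hB
  set c : ℝ := 1 / (3 * ((i:ℝ) - (j:ℝ)) - 1) with hC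
  have ha' : a ≠ 0 := one_div_ne_zero ha
  have hb' : b ≠ 0 := one_div_ne_zero hb
  have hc' : c ≠ 0 := one_div_ne_zero hc
  -- key algebraic identity
  have key : (3 * ((i:ℝ) - (j:ℝ)) - 1)⁻¹ * (3 * (j:ℝ) - 1)⁻¹
      - (3 * ((i:ℝ) - (j:ℝ)) - 1)⁻¹ * (3 * (i:ℝ) - 2)⁻¹
      - (3 * (j:ℝ) - 1)⁻¹ * (3 * (i:ℝ) - 2)⁻¹ = 0 := by
    field_simp
    ring
  rw [collinear_iff_of_mem (Set.mem_insert _ _)]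
  refine ⟨b • u 2 - a • u 1, ?_⟩
  intro x hx
  simp only [Set.mem_insert_iff, Set.mem_singleton_iff] at hx
  rcases hx with h | h | h
  · exact ⟨0, by rw [h]; simp⟩
  · exact ⟨1, by rw [h]; simp⟩
  · refine ⟨-(c / b), ?_⟩
    rw [h]
    ext k
    fin_cases k <;>
      simp [u1_eq, u2_eq, u6_eq, PiLp.smul_apply, PiLp.add_apply, PiLp.sub_apply,
        smul_eq_mul]
    · -- x coordinate
      field_simp
      linear_combination (2:ℝ) * key
    · -- y coordinate
      field_simp
end

section
/- For k = 1, …, 6 let u_k = (cos((k−1)π/3), sin((k−1)π/3)) ∈ ℝ². For all positive integers i, j with i ≤ j, the three points p = (1/(3i−2))·u_1, q = (1/(3j−1))·u_2, and s = (1/(3(j−i+1)−2))·u_3 are collinear. -/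
theorem collinear_case_pi_div_three_le (i j : ℕ) (hi : 1 ≤ i) (hj : 1 ≤ j) (hij : i ≤ j) :
    Collinear ℝ ({(1 / (3 * (i : ℝ) - 2)) • u 1, (1 / (3 * (j : ℝ) - 1)) • u 2,
      (1 / (3 * ((j : ℝ) - (i : ℝ) + 1) - 2)) • u 3} : Set (EuclideanSpace ℝ (Fin 2))) := by
  have hi' : (1 : ℝ) ≤ (i : ℝ) := by exact_mod_cast hi
  have hj' : (1 : ℝ) ≤ (j : ℝ) := by exact_mod_cast hj
  have hij' : (i : ℝ) ≤ (j : ℝ) := by exact_mod_cast hij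
  set A : ℝ := 3 * (i : ℝ) - 2 with hA
  set B : ℝ := 3 * (j : ℝ) - 1 with hB
  set C : ℝ := 3 * ((j : ℝ) - (i : ℝ) + 1) - 2 with hC
  have hA0 : A ≠ 0 := by dsimp [hA]; nlinarith
  have hB0 : B ≠ 0 := by dsimp [hB]; nlinarith
  have hC0 : C ≠ 0 := by dsimp [hC]; nlinarith
  have hBAC : B = A + C := by rw [hA, hB, hC]; ring
  have hmem : (1 / A) • u 1 ∈ ({(1 / A) • u 1, (1 / B) • u 2, (1 / C) • u 3} :
      Set (EuclideanSpace ℝ (Fin 2))) := by left; rfl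
  rw [collinear_iff_of_mem hmem]
  refine ⟨(1 / C) • u 3 - (1 / A) • u 1, ?_⟩
  have hc1 : Real.cos ((1 - 1 : ℝ) * Real.pi / 3) = 1 := by norm_num
  have hs1 : Real.sin ((1 - 1 : ℝ) * Real.pi / 3) = 0 := by norm_num
  have hc2 : Real.cos ((2 - 1 : ℝ) * Real.pi / 3) = 1 / 2 := by
    norm_num [Real.cos_pi_div_three]
  have hs2 : Real.sin ((2 - 1 : ℝ) * Real.pi / 3) = Real.sqrt 3 / 2 := by
    norm_num [Real.sin_pi_div_three]
  have hc3 : Real.cos ((3 - 1 : ℝ) * Real.pi / 3) = -(1 / 2) := by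
    have : (3 - 1 : ℝ) * Real.pi / 3 = Real.pi - Real.pi / 3 := by ring
    rw [this, Real.cos_pi_sub, Real.cos_pi_div_three]
  have hs3 : Real.sin ((3 - 1 : ℝ) * Real.pi / 3) = Real.sqrt 3 / 2 := by
    have : (3 - 1 : ℝ) * Real.pi / 3 = Real.pi - Real.pi / 3 := by ring
    rw [this, Real.sin_pi_sub, Real.sin_pi_div_three]
  intro p hp
  rcases hp with h | h | h
  · refine ⟨0, ?_⟩; rw [h]; simp
  · refine ⟨C / B, ?_⟩
    rw [h]
    ext x
    fin_cases x <;>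
      simp [u, hc1, hs1, hc2, hs2, hc3, hs3, PiLp.smul_apply, PiLp.add_apply,
        PiLp.sub_apply, smul_eq_mul] <;>
      field_simp <;> rw [hBAC] <;> ring
  · refine ⟨1, ?_⟩
    rw [h]
    ext x
    simp
end

section
/- For k = 1, …, 6 let u_k = (cos((k−1)π/3), sin((k−1)π/3)) ∈ ℝ². For all positive integers i, j, the three points p = (1/(3i−2))·u_1, q = (1/(3j−2))·u_3, and s = (1/(3(i+j−1)−1))·u_2 are collinear. -/
theorem collinear_case_two_pi_div_three_odd (i j : ℕ) (hi : 1 ≤ i) (hj : 1 ≤ j) :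
    Collinear ℝ ({(1 / (3 * (i : ℝ) - 2)) • u 1, (1 / (3 * (j : ℝ) - 2)) • u 3,
      (1 / (3 * ((i : ℝ) + (j : ℝ) - 1) - 1)) • u 2} : Set (EuclideanSpace ℝ (Fin 2))) := by
  have hi' : (1 : ℝ) ≤ (i : ℝ) := by exact_mod_cast hi
  have hj' : (1 : ℝ) ≤ (j : ℝ) := by exact_mod_cast hj
  have hA : (3 * (i : ℝ) - 2) ≠ 0 := by nlinarith
  have hB : (3 * (j : ℝ) - 2) ≠ 0 := by nlinarith
  have hC : (3 * ((i : ℝ) + (j : ℝ) - 1) - 1) ≠ 0 := by nlinarith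
  set p : EuclideanSpace ℝ (Fin 2) := (1 / (3 * (i : ℝ) - 2)) • u 1 with hp
  set q : EuclideanSpace ℝ (Fin 2) := (1 / (3 * (j : ℝ) - 2)) • u 3 with hq
  set s : EuclideanSpace ℝ (Fin 2) :=
    (1 / (3 * ((i : ℝ) + (j : ℝ) - 1) - 1)) • u 2 with hs
  have hset : ({p, q, s} : Set (EuclideanSpace ℝ (Fin 2))) = {s, p, q} := by
    ext x; simp only [Set.mem_insert_iff, Set.mem_singleton_iff]; tauto
  rw [hset]
  apply collinear_insert_of_mem_affineSpan_pair
  have key : s = AffineMap.lineMap p q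
      ((3 * (j : ℝ) - 2) / (3 * ((i : ℝ) + (j : ℝ) - 1) - 1)) := by
    have h1 : u 1 = WithLp.toLp 2 ![1, 0] := by
      norm_num [u]
    have h2 : u 2 = WithLp.toLp 2 ![1 / 2, Real.sqrt 3 / 2] := by
      have : ((2 : ℕ) - 1 : ℝ) * Real.pi / 3 = Real.pi / 3 := by push_cast; ring
      rw [u, this, Real.cos_pi_div_three, Real.sin_pi_div_three]
    have h3 : u 3 = WithLp.toLp 2 ![-(1 / 2), Real.sqrt 3 / 2] := by
      have : ((3 : ℕ) - 1 : ℝ) * Real.pi / 3 = Real.pi - Real.pi / 3 := by push_cast; ring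
      rw [u, this, Real.cos_pi_sub, Real.sin_pi_sub, Real.cos_pi_div_three,
        Real.sin_pi_div_three]
    rw [hp, hq, hs, h1, h2, h3]
    ext x
    simp only [AffineMap.lineMap_apply, vsub_eq_sub, vadd_eq_add]
    fin_cases x <;>
      simp only [PiLp.add_apply, PiLp.sub_apply, PiLp.smul_apply, PiLp.toLp_apply, Fin.zero_eta, Fin.mk_one,
        Matrix.cons_val_zero, Matrix.cons_val_one, Matrix.head_cons, smul_eq_mul] <;>
      field_simp <;> ring
  rw [key]
  exact AffineMap.lineMap_mem_affineSpan_pair _ _ _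
end

section
/- For every integer n > 3 there exist pairwise disjoint, compact, strictly convex subsets K₁, …, Kₙ of ℝ², each with nonempty interior, such that no affine line L in ℝ² satisfies that L ∩ (K₁ ∪ ⋯ ∪ Kₙ) consists of exactly two points. -/
set_option maxHeartbeats 1000000

section ArithPart


section CoreArith
variable {u₁ u₂ c : ℝ}

lemma sq_le_one_left (hu : u₁^2 + u₂^2 = 1) : -1 ≤ u₁ ∧ u₁ ≤ 1 :=
  ⟨by nlinarith [sq_nonneg u₂, sq_nonneg (u₁+1)], by nlinarith [sq_nonneg u₂, sq_nonneg (u₁-1)]⟩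

-- master E lemma, case A : steep-ish line tangent to an E-disk crosses B
lemma arith_E_A (hu : u₁^2 + u₂^2 = 1) {e t' : ℝ} (he : |e - 1| ≤ 1/1000)
    (ht : 0 < t') (ht2 : t' ≤ 1/2000) (hu2 : |u₂| ≤ 9/10)
    (hE : |(141/100)*u₁ + e*u₂ - c| = t') :
    |(141/100)*u₁ + (99/200)*u₂ - c| < 99/200 := by
  rw [abs_le] at he
  rw [abs_le] at hu2
  rcases (abs_eq (le_of_lt ht)).mp hE with h | h <;>
  · rw [abs_lt]
    constructor <;> nlinarith [mul_le_mul_of_nonneg_left he.1 (abs_nonneg u₂),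
      sq_nonneg u₁, sq_nonneg u₂, abs_nonneg u₂, le_abs_self u₂, neg_abs_le u₂,
      mul_le_mul (le_refl (9/10 : ℝ)) (le_refl (1:ℝ)) (by norm_num : (0:ℝ) ≤ 1) (by norm_num : (0:ℝ) ≤ 9/10),
      mul_le_mul_of_nonneg_left hu2.2 (by norm_num : (0:ℝ) ≤ 101/200 + 1/1000),
      mul_le_mul_of_nonneg_left (neg_le_of_neg_le hu2.1) (by norm_num : (0:ℝ) ≤ 101/200 + 1/1000),
      mul_le_of_le_one_left (abs_nonneg u₂) (le_refl (1:ℝ))]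
end CoreArith

section CoreArith2
variable {u₁ u₂ c : ℝ}

-- master E lemma, case B : shallow line tangent to an E-disk crosses wall L
lemma arith_E_B (hu : u₁^2 + u₂^2 = 1) {e t' : ℝ} (he : |e - 1| ≤ 1/1000)
    (ht : 0 < t') (ht2 : t' ≤ 1/2000) (hu2 : 9/10 ≤ |u₂|)
    (hE : |(141/100)*u₁ + e*u₂ - c| = t') :
    |u₂ - c| < 1 := by
  rw [abs_le] at he
  have hsq : 81/100 ≤ u₂^2 := by nlinarith [sq_abs u₂, abs_nonneg u₂]
  have hu1 : u₁^2 ≤ 19/100 := by nlinarith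
  have hu1a : -(1/2) ≤ u₁ ∧ u₁ ≤ 1/2 :=
    ⟨by nlinarith [sq_nonneg (u₁ + 1/2)], by nlinarith [sq_nonneg (u₁ - 1/2)]⟩
  have hu2a : -1 ≤ u₂ ∧ u₂ ≤ 1 :=
    ⟨by nlinarith [sq_nonneg u₁, sq_nonneg (u₂+1)], by nlinarith [sq_nonneg u₁, sq_nonneg (u₂-1)]⟩
  have hp1 : u₂ * (1 - e) ≤ 1/1000 := by nlinarith [hu2a.1, hu2a.2, he.1, he.2]
  have hp2 : -(1/1000) ≤ u₂ * (1 - e) := by nlinarith [hu2a.1, hu2a.2, he.1, he.2]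
  rcases (abs_eq (le_of_lt ht)).mp hE with h | h <;>
  · rw [abs_lt]
    constructor <;> linarith [hu1a.1, hu1a.2, hp1, hp2]


-- pair (L,R) : horizontal tangents hit B or T exactly; internal tangents hit B
lemma arith_LR (hu : u₁^2 + u₂^2 = 1)
    (hL : |u₂ - c| = 1) (hR : |(141/50)*u₁ + u₂ - c| = 1) :
    |(141/100)*u₁ + (99/200)*u₂ - c| ≤ 99/200 ∨
    |(141/100)*u₁ + (301/200)*u₂ - c| ≤ 99/200 := by
  rcases (abs_eq (by norm_num : (0:ℝ) ≤ 1)).mp hL with h1 | h1 <;>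
  rcases (abs_eq (by norm_num : (0:ℝ) ≤ 1)).mp hR with h2 | h2
  · -- u₁ = 0, u₂ = ±1
    have hu1 : u₁ = 0 := by linarith
    have hc : c = u₂ - 1 := by linarith
    have : (u₂ - 1) * (u₂ + 1) = 0 := by nlinarith
    rcases mul_eq_zero.mp this with h | h
    · left
      have key : (141/100)*u₁ + (99/200)*u₂ - c = 99/200 := by
        rw [hu1, hc]; nlinarith
      rw [key, abs_of_pos (by norm_num : (0:ℝ) < 99/200)]
    · right
      have key : (141/100)*u₁ + (301/200)*u₂ - c = 99/200 := by
        rw [hu1, hc]; nlinarith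
      rw [key, abs_of_pos (by norm_num : (0:ℝ) < 99/200)]
  · -- internal: u₁ = -100/141
    have hu1 : u₁ = -(100/141) := by linarith
    have hc : c = u₂ - 1 := by linarith
    have hsq : u₂^2 = 9881/19881 := by nlinarith
    left
    have key : (141/100)*u₁ + (99/200)*u₂ - c = -(101/200)*u₂ := by rw [hu1, hc]; ring
    rw [key, abs_le]
    constructor <;> nlinarith [sq_nonneg (u₂ - 99/101), sq_nonneg (u₂ + 99/101)]
  · have hu1 : u₁ = 100/141 := by linarith
    have hc : c = u₂ + 1 := by linarith
    have hsq : u₂^2 = 9881/19881 := by nlinarith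
    left
    have key : (141/100)*u₁ + (99/200)*u₂ - c = -(101/200)*u₂ := by rw [hu1, hc]; ring
    rw [key, abs_le]
    constructor <;> nlinarith [sq_nonneg (u₂ - 99/101), sq_nonneg (u₂ + 99/101)]
  · have hu1 : u₁ = 0 := by linarith
    have hc : c = u₂ + 1 := by linarith
    have : (u₂ - 1) * (u₂ + 1) = 0 := by nlinarith
    rcases mul_eq_zero.mp this with h | h
    · right
      have key : (141/100)*u₁ + (301/200)*u₂ - c = -(99/200) := by
        rw [hu1, hc]; nlinarith
      rw [key, abs_neg, abs_of_pos (by norm_num : (0:ℝ) < 99/200)]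
    · left
      have key : (141/100)*u₁ + (99/200)*u₂ - c = -(99/200) := by
        rw [hu1, hc]; nlinarith
      rw [key, abs_neg, abs_of_pos (by norm_num : (0:ℝ) < 99/200)]

end CoreArith2

section CoreArith3
variable {u₁ u₂ c : ℝ}

-- pair (L,B), normalized so that sL = 1
lemma arith_LB' (hu : u₁^2 + u₂^2 = 1)
    (h1 : u₂ - c = 1) (hB : |(141/100)*u₁ + (99/200)*u₂ - c| = 99/200) :
    |(141/50)*u₁ + u₂ - c| ≤ 1 ∨ |(141/100)*u₁ + (301/200)*u₂ - c| ≤ 99/200 := by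
  have hc : c = u₂ - 1 := by linarith
  rcases (abs_eq (by norm_num : (0:ℝ) ≤ 99/200)).mp hB with h | h
  · -- external tangent: blocked by R
    left
    -- constraint: 282*u₁ - 101*u₂ = -101
    have hC : 282*u₁ - 101*u₂ = -101 := by rw [hc] at h; nlinarith
    have key : (141/50)*u₁ + u₂ - c = 1 + (141/50)*u₁ := by rw [hc]; ring
    rw [key, abs_le]
    constructor
    · -- u₁ ≥ -100/141
      nlinarith [sq_nonneg (u₂ + 99/101), sq_nonneg (141*u₁ + 100)]
    · -- u₁ ≤ 0  (since u₂ ≤ 1)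
      nlinarith [sq_nonneg u₁, sq_nonneg (u₂ - 1)]
  · -- internal tangent: blocked by T
    right
    have hC : 282*u₁ - 101*u₂ = -299 := by rw [hc] at h; nlinarith
    have key : (141/100)*u₁ + (301/200)*u₂ - c = -(99/200) + (101/100)*u₂ := by
      rw [hc]
      nlinarith [hC]
    rw [key, abs_le]
    constructor
    · -- u₂ ≥ 0
      nlinarith [sq_nonneg u₂, sq_nonneg (u₁ + 1)]
    · -- u₂ ≤ 99/101
      nlinarith [sq_nonneg (282*u₁ + 200), sq_nonneg (101*u₂ - 99)]

lemma arith_LB (hu : u₁^2 + u₂^2 = 1)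
    (hL : |u₂ - c| = 1) (hB : |(141/100)*u₁ + (99/200)*u₂ - c| = 99/200) :
    |(141/50)*u₁ + u₂ - c| ≤ 1 ∨ |(141/100)*u₁ + (301/200)*u₂ - c| ≤ 99/200 := by
  rcases (abs_eq (by norm_num : (0:ℝ) ≤ 1)).mp hL with h1 | h1
  · exact arith_LB' hu h1 hB
  · have hu' : (-u₁)^2 + (-u₂)^2 = 1 := by nlinarith
    have h1' : (-u₂) - (-c) = 1 := by linarith
    have hB' : |(141/100)*(-u₁) + (99/200)*(-u₂) - (-c)| = 99/200 := by
      rw [show (141/100)*(-u₁) + (99/200)*(-u₂) - (-c) = -((141/100)*u₁ + (99/200)*u₂ - c) by ring, abs_neg]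
      exact hB
    rcases arith_LB' hu' h1' hB' with h | h
    · left
      rwa [show (141/50)*(-u₁) + (-u₂) - (-c) = -((141/50)*u₁ + u₂ - c) by ring, abs_neg] at h
    · right
      rwa [show (141/100)*(-u₁) + (301/200)*(-u₂) - (-c) = -((141/100)*u₁ + (301/200)*u₂ - c) by ring, abs_neg] at h

-- pair (B,T)
lemma arith_BT (hu : u₁^2 + u₂^2 = 1)
    (hB : |(141/100)*u₁ + (99/200)*u₂ - c| = 99/200)
    (hT : |(141/100)*u₁ + (301/200)*u₂ - c| = 99/200) :
    |u₂ - c| ≤ 1 ∨ |(141/50)*u₁ + u₂ - c| ≤ 1 := by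
  rcases (abs_eq (by norm_num : (0:ℝ) ≤ 99/200)).mp hB with h1 | h1 <;>
  rcases (abs_eq (by norm_num : (0:ℝ) ≤ 99/200)).mp hT with h2 | h2
  · -- external, u₂ = 0, u₁ = ±1
    have hu2 : u₂ = 0 := by linarith
    have : (u₁ - 1) * (u₁ + 1) = 0 := by nlinarith
    rcases mul_eq_zero.mp this with h | h
    · -- u₁ = 1 : c = 141/100 - 99/200 = 183/200 ; sL = -183/200
      left
      have key : u₂ - c = -(183/200) := by rw [hu2] at h1 ⊢; nlinarith
      rw [key, abs_neg, abs_of_pos (by norm_num : (0:ℝ) < 183/200)]; norm_num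
    · right
      have key : (141/50)*u₁ + u₂ - c = -(183/200) := by rw [hu2] at h1 ⊢; nlinarith
      rw [key, abs_neg, abs_of_pos (by norm_num : (0:ℝ) < 183/200)]; norm_num
  · -- internal : u₂ = -99/101
    have hu2 : u₂ = -(99/101) := by linarith
    left
    have key : u₂ - c = -((141/100)*u₁) := by rw [hu2] at h1 ⊢; linarith
    rw [key, abs_neg, abs_le]
    have hsq : u₁^2 = 400/10201 := by rw [hu2] at hu; norm_num at hu; linarith
    constructor <;> nlinarith [sq_nonneg (u₁ - 20/101), sq_nonneg (u₁ + 20/101)]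
  · have hu2 : u₂ = 99/101 := by linarith
    left
    have key : u₂ - c = -((141/100)*u₁) := by rw [hu2] at h1 ⊢; linarith
    rw [key, abs_neg, abs_le]
    have hsq : u₁^2 = 400/10201 := by rw [hu2] at hu; norm_num at hu; linarith
    constructor <;> nlinarith [sq_nonneg (u₁ - 20/101), sq_nonneg (u₁ + 20/101)]
  · have hu2 : u₂ = 0 := by linarith
    have : (u₁ - 1) * (u₁ + 1) = 0 := by nlinarith
    rcases mul_eq_zero.mp this with h | h
    · right
      have key : (141/50)*u₁ + u₂ - c = 183/200 := by rw [hu2] at h1 ⊢; nlinarith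
      rw [key, abs_of_pos (by norm_num : (0:ℝ) < 183/200)]; norm_num
    · left
      have key : u₂ - c = 183/200 := by rw [hu2] at h1 ⊢; nlinarith
      rw [key, abs_of_pos (by norm_num : (0:ℝ) < 183/200)]; norm_num
end CoreArith3

section CoreArith4
variable {u₁ u₂ c : ℝ}

-- (L,T) from (L,B) by the mirror y ↦ 2 - y :  (u₁,u₂,c) ↦ (u₁,-u₂,c-2u₂)
lemma arith_LT (hu : u₁^2 + u₂^2 = 1)
    (hL : |u₂ - c| = 1) (hT : |(141/100)*u₁ + (301/200)*u₂ - c| = 99/200) :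
    |(141/50)*u₁ + u₂ - c| ≤ 1 ∨ |(141/100)*u₁ + (99/200)*u₂ - c| ≤ 99/200 := by
  have hu' : u₁^2 + (-u₂)^2 = 1 := by nlinarith
  have hL' : |(-u₂) - (c - 2*u₂)| = 1 := by
    rw [show (-u₂) - (c - 2*u₂) = u₂ - c by ring]; exact hL
  have hB' : |(141/100)*u₁ + (99/200)*(-u₂) - (c - 2*u₂)| = 99/200 := by
    rw [show (141/100)*u₁ + (99/200)*(-u₂) - (c - 2*u₂) = (141/100)*u₁ + (301/200)*u₂ - c by ring]
    exact hT
  rcases arith_LB hu' hL' hB' with h | h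
  · left
    rwa [show (141/50)*u₁ + (-u₂) - (c - 2*u₂) = (141/50)*u₁ + u₂ - c by ring] at h
  · right
    rwa [show (141/100)*u₁ + (301/200)*(-u₂) - (c - 2*u₂) = (141/100)*u₁ + (99/200)*u₂ - c by ring] at h

-- (R,B) from (L,B) by the mirror x ↦ 282/100 - x : (u₁,u₂,c) ↦ (-u₁,u₂,c-(141/50)u₁)
lemma arith_RB (hu : u₁^2 + u₂^2 = 1)
    (hR : |(141/50)*u₁ + u₂ - c| = 1) (hB : |(141/100)*u₁ + (99/200)*u₂ - c| = 99/200) :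
    |u₂ - c| ≤ 1 ∨ |(141/100)*u₁ + (301/200)*u₂ - c| ≤ 99/200 := by
  have hu' : (-u₁)^2 + u₂^2 = 1 := by nlinarith
  have hL' : |u₂ - (c - (141/50)*u₁)| = 1 := by
    rw [show u₂ - (c - (141/50)*u₁) = (141/50)*u₁ + u₂ - c by ring]; exact hR
  have hB' : |(141/100)*(-u₁) + (99/200)*u₂ - (c - (141/50)*u₁)| = 99/200 := by
    rw [show (141/100)*(-u₁) + (99/200)*u₂ - (c - (141/50)*u₁) = (141/100)*u₁ + (99/200)*u₂ - c by ring]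
    exact hB
  rcases arith_LB hu' hL' hB' with h | h
  · left
    rwa [show (141/50)*(-u₁) + u₂ - (c - (141/50)*u₁) = u₂ - c by ring] at h
  · right
    rwa [show (141/100)*(-u₁) + (301/200)*u₂ - (c - (141/50)*u₁) = (141/100)*u₁ + (301/200)*u₂ - c by ring] at h

-- (R,T)
lemma arith_RT (hu : u₁^2 + u₂^2 = 1)
    (hR : |(141/50)*u₁ + u₂ - c| = 1) (hT : |(141/100)*u₁ + (301/200)*u₂ - c| = 99/200) :
    |u₂ - c| ≤ 1 ∨ |(141/100)*u₁ + (99/200)*u₂ - c| ≤ 99/200 := by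
  have hu' : (-u₁)^2 + u₂^2 = 1 := by nlinarith
  have hL' : |u₂ - (c - (141/50)*u₁)| = 1 := by
    rw [show u₂ - (c - (141/50)*u₁) = (141/50)*u₁ + u₂ - c by ring]; exact hR
  have hT' : |(141/100)*(-u₁) + (301/200)*u₂ - (c - (141/50)*u₁)| = 99/200 := by
    rw [show (141/100)*(-u₁) + (301/200)*u₂ - (c - (141/50)*u₁) = (141/100)*u₁ + (301/200)*u₂ - c by ring]
    exact hT
  rcases arith_LT hu' hL' hT' with h | h
  · left
    rwa [show (141/50)*(-u₁) + u₂ - (c - (141/50)*u₁) = u₂ - c by ring] at h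
  · right
    rwa [show (141/100)*(-u₁) + (99/200)*u₂ - (c - (141/50)*u₁) = (141/100)*u₁ + (99/200)*u₂ - c by ring] at h
end CoreArith4

end ArithPart

open Metric

local notation "E2" => EuclideanSpace ℝ (Fin 2)

noncomputable section

lemma inner_eq2 (x y : E2) : (inner ℝ x y : ℝ) = x 0 * y 0 + x 1 * y 1 := by
  rw [PiLp.inner_apply, Fin.sum_univ_two]; simp only [RCLike.inner_apply, conj_trivial]; ring

lemma norm_sq_eq2 (x : E2) : ‖x‖^2 = x 0^2 + x 1^2 := by
  rw [← real_inner_self_eq_norm_sq, inner_eq2]; ring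

def rot (u : E2) : E2 := !₂[-(u 1), u 0]

lemma norm_rot (u : E2) : ‖rot u‖ = ‖u‖ := by
  have h1 : ‖rot u‖^2 = ‖u‖^2 := by
    rw [norm_sq_eq2, norm_sq_eq2]
    show (-(u 1))^2 + (u 0)^2 = _
    ring
  calc ‖rot u‖ = √(‖rot u‖^2) := (Real.sqrt_sq (norm_nonneg _)).symm
    _ = √(‖u‖^2) := by rw [h1]
    _ = ‖u‖ := Real.sqrt_sq (norm_nonneg _)

lemma inner_rot (u : E2) : (inner ℝ u (rot u) : ℝ) = 0 := by
  rw [inner_eq2]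
  show u 0 * (-(u 1)) + u 1 * (u 0) = 0
  ring

lemma vec_ext {x y : E2} (h0 : x 0 = y 0) (h1 : x 1 = y 1) : x = y := by
  apply PiLp.ext
  intro i
  fin_cases i <;> assumption

lemma line_normal_form {L : AffineSubspace ℝ E2} (hL : Module.finrank ℝ L.direction = 1)
    {p : E2} (hp : p ∈ L) :
    ∃ u : E2, ‖u‖ = 1 ∧ ∀ x : E2, x ∈ L ↔ (inner ℝ u x : ℝ) = (inner ℝ u p : ℝ) := by
  have h0 : L.direction ≠ ⊥ := by
    intro h; rw [h] at hL; simp at hL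
  obtain ⟨v, hv_mem, hv0⟩ := (Submodule.ne_bot_iff _).mp h0
  have hspan : Submodule.span ℝ {v} = L.direction := by
    apply Submodule.eq_of_le_of_finrank_eq
    · rwa [Submodule.span_le, Set.singleton_subset_iff]
    · rw [finrank_span_singleton hv0, hL]
  have hvnorm : ‖v‖ ≠ 0 := norm_ne_zero_iff.mpr hv0
  refine ⟨‖v‖⁻¹ • rot v, ?_, ?_⟩
  · rw [norm_smul, norm_inv, norm_norm, norm_rot, inv_mul_cancel₀ hvnorm]
  · set u : E2 := ‖v‖⁻¹ • rot v with hu_def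
    have huv : (inner ℝ u v : ℝ) = 0 := by
      rw [hu_def, real_inner_smul_left]
      have : (inner ℝ (rot v) v : ℝ) = 0 := by
        rw [inner_eq2]
        show (-(v 1)) * v 0 + v 0 * v 1 = 0
        ring
      rw [this]; ring
    intro x
    constructor
    · intro hx
      have hmem : x -ᵥ p ∈ L.direction := AffineSubspace.vsub_mem_direction hx hp
      rw [← hspan, Submodule.mem_span_singleton] at hmem
      obtain ⟨a, ha⟩ := hmem
      have hxp : x - p = a • v := by rw [← vsub_eq_sub, ← ha]
      have : (inner ℝ u (x - p) : ℝ) = 0 := by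
        rw [hxp, real_inner_smul_right, huv]; ring
      rw [inner_sub_right] at this; linarith
    · intro hx
      have hw : (inner ℝ u (x - p) : ℝ) = 0 := by
        rw [inner_sub_right]; rw [hx]; ring
      have hcoord0 : -(v 1) * (x - p) 0 + v 0 * (x - p) 1 = 0 := by
        rw [hu_def, real_inner_smul_left, inner_eq2] at hw
        rcases mul_eq_zero.mp hw with h | h
        · exact absurd h (inv_ne_zero hvnorm)
        · show -(v 1) * (x - p) 0 + v 0 * (x - p) 1 = 0
          have : rot v 0 * (x-p) 0 + rot v 1 * (x-p) 1 = 0 := h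
          simpa [rot] using this
      have hcoord : -(v 1) * (x 0 - p 0) + v 0 * (x 1 - p 1) = 0 := hcoord0
      have hv01 : v 0 ≠ 0 ∨ v 1 ≠ 0 := by
        by_contra hcon
        push_neg at hcon
        exact hv0 (vec_ext (by simp [hcon.1]) (by simp [hcon.2]))
      have hw_span : x - p ∈ Submodule.span ℝ {v} := by
        rw [Submodule.mem_span_singleton]
        rcases hv01 with h | h
        · refine ⟨(x - p) 0 / v 0, vec_ext ?_ ?_⟩
          · show (x-p) 0 / v 0 * v 0 = (x - p) 0
            field_simp
          · show (x-p) 0 / v 0 * v 1 = (x - p) 1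
            field_simp
            linear_combination -hcoord0
        · refine ⟨(x - p) 1 / v 1, vec_ext ?_ ?_⟩
          · show (x-p) 1 / v 1 * v 0 = (x - p) 0
            field_simp
            linear_combination hcoord0
          · show (x-p) 1 / v 1 * v 1 = (x - p) 1
            field_simp
      rw [hspan] at hw_span
      have hfin := AffineSubspace.vadd_mem_of_mem_direction hw_span hp
      have : (x - p) +ᵥ p = x := by
        rw [vadd_eq_add]; abel
      rwa [this] at hfin

end

noncomputable section
namespace NoOrd

lemma inner_self_one {u : E2} (hu : ‖u‖ = 1) : (inner ℝ u u : ℝ) = 1 := by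
  rw [real_inner_self_eq_norm_sq, hu]; norm_num

/-- if the center is at distance ≤ r from the line, the line meets the closed ball -/
lemma line_meets_ball {u : E2} (hu : ‖u‖ = 1) {c r : ℝ} {P : E2}
    (h : |(inner ℝ u P : ℝ) - c| ≤ r) :
    ∃ x : E2, (inner ℝ u x : ℝ) = c ∧ x ∈ closedBall P r := by
  refine ⟨P - ((inner ℝ u P : ℝ) - c) • u, ?_, ?_⟩
  · rw [inner_sub_right, real_inner_smul_right, inner_self_one hu]; ring
  · rw [mem_closedBall, dist_eq_norm]
    have : P - ((inner ℝ u P : ℝ) - c) • u - P = -(((inner ℝ u P : ℝ) - c) • u) := by abel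
    rw [this, norm_neg, norm_smul, hu, mul_one]
    exact h

/-- if the center is at distance < r from the line, the line meets the ball twice -/
lemma line_meets_ball_twice {u : E2} (hu : ‖u‖ = 1) {c r : ℝ} {P : E2}
    (h : |(inner ℝ u P : ℝ) - c| < r) :
    ∃ x y : E2, x ≠ y ∧ ((inner ℝ u x : ℝ) = c ∧ x ∈ closedBall P r) ∧
      ((inner ℝ u y : ℝ) = c ∧ y ∈ closedBall P r) := by
  set d := (inner ℝ u P : ℝ) - c with hd
  have hr : 0 < r := lt_of_le_of_lt (abs_nonneg d) h
  set δ := Real.sqrt (r^2 - d^2) with hδ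
  have hd2 : d^2 < r^2 := by
    nlinarith [sq_abs d, abs_nonneg d]
  have hδpos : 0 < δ := Real.sqrt_pos.mpr (by linarith)
  have hδsq : δ^2 = r^2 - d^2 := Real.sq_sqrt (by linarith)
  set f := P - d • u with hf
  have hrot : ‖rot u‖ = 1 := by rw [norm_rot, hu]
  have hurot : (inner ℝ u (rot u) : ℝ) = 0 := inner_rot u
  have hfin : ∀ s : ℝ, (inner ℝ u (f + s • rot u) : ℝ) = c := by
    intro s
    rw [inner_add_right, real_inner_smul_right, hurot, hf, inner_sub_right,
      real_inner_smul_right, inner_self_one hu]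
    ring
  have hnorm : ∀ s : ℝ, ‖f + s • rot u - P‖^2 = d^2 + s^2 := by
    intro s
    have heq : f + s • rot u - P = (-d) • u + s • rot u := by rw [hf, neg_smul]; abel
    rw [heq, norm_add_sq_real, real_inner_smul_left, real_inner_smul_right, hurot,
      norm_smul, norm_smul, hu, hrot, mul_one, mul_one]
    rw [Real.norm_eq_abs, Real.norm_eq_abs, sq_abs, sq_abs]
    ring
  have hmem : ∀ s : ℝ, s^2 = r^2 - d^2 → f + s • rot u ∈ closedBall P r := by
    intro s hs
    rw [mem_closedBall, dist_eq_norm]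
    have h2 : ‖f + s • rot u - P‖^2 = r^2 := by rw [hnorm s, hs]; ring
    nlinarith [norm_nonneg (f + s • rot u - P)]
  refine ⟨f + δ • rot u, f + (-δ) • rot u, ?_, ⟨hfin δ, hmem δ hδsq⟩,
    ⟨hfin (-δ), hmem (-δ) (by rw [neg_pow]; simpa using hδsq)⟩⟩
  intro hcon
  have : (2*δ) • rot u = 0 := by
    have := sub_eq_zero.mpr hcon
    rw [show f + δ • rot u - (f + (-δ) • rot u) = (2*δ) • rot u by rw [two_mul]; rw [add_smul, neg_smul]; abel] at this
    exact this
  have hrne : rot u ≠ 0 := by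
    intro h0
    rw [h0, norm_zero] at hrot
    norm_num at hrot
  rcases smul_eq_zero.mp this with h0 | h0
  · linarith
  · exact hrne h0

/-- Cauchy-Schwarz: a point on the line and in the ball forces center distance ≤ r -/
lemma dist_le_of_mem {u : E2} (hu : ‖u‖ = 1) {c r : ℝ} {P x : E2}
    (hx : (inner ℝ u x : ℝ) = c) (hmem : x ∈ closedBall P r) :
    |(inner ℝ u P : ℝ) - c| ≤ r := by
  have h1 : (inner ℝ u P : ℝ) - c = (inner ℝ u (P - x) : ℝ) := by
    rw [inner_sub_right, hx]
  rw [h1]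
  calc |(inner ℝ u (P - x) : ℝ)| ≤ ‖u‖ * ‖P - x‖ := abs_real_inner_le_norm u (P - x)
    _ = ‖P - x‖ := by rw [hu, one_mul]
    _ = dist x P := by rw [dist_eq_norm, ← norm_neg]; congr 1; abel
    _ ≤ r := mem_closedBall.mp hmem

end NoOrd
end

noncomputable section
namespace NoOrd

theorem no_ordinary (n : ℕ) (P : Fin n → E2) (rad : Fin n → ℝ) (hr : ∀ i, 0 < rad i)
    (hdisj : Pairwise fun i j => Disjoint (closedBall (P i) (rad i)) (closedBall (P j) (rad j)))
    (CORE : ∀ u : E2, ‖u‖ = 1 → ∀ c : ℝ, ∀ i j : Fin n, i ≠ j →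
      |(inner ℝ u (P i) : ℝ) - c| = rad i → |(inner ℝ u (P j) : ℝ) - c| = rad j →
      ∃ k, k ≠ i ∧ k ≠ j ∧ |(inner ℝ u (P k) : ℝ) - c| ≤ rad k)
    (L : AffineSubspace ℝ E2) (hL : Module.finrank ℝ L.direction = 1) :
    ¬ ∃ p q : E2, p ≠ q ∧ (L : Set E2) ∩ (⋃ i, closedBall (P i) (rad i)) = {p, q} := by
  rintro ⟨p, q, hpq, hset⟩
  have hp : p ∈ (L : Set E2) ∩ (⋃ i, closedBall (P i) (rad i)) := by
    rw [hset]; left; rfl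
  have hq : q ∈ (L : Set E2) ∩ (⋃ i, closedBall (P i) (rad i)) := by
    rw [hset]; right; rfl
  obtain ⟨u, hu, hiff⟩ := line_normal_form hL hp.1
  set c : ℝ := (inner ℝ u p : ℝ) with hc
  -- the balls
  set Bl : Fin n → Set E2 := fun i => closedBall (P i) (rad i) with hBl
  have hSsub : ∀ i, (L : Set E2) ∩ Bl i ⊆ ({p, q} : Set E2) := by
    intro i x hx
    rw [← hset]
    exact ⟨hx.1, Set.mem_iUnion.mpr ⟨i, hx.2⟩⟩
  have hnotboth : ∀ i, ¬ (p ∈ Bl i ∧ q ∈ Bl i) := by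
    rintro i ⟨hpi, hqi⟩
    have hconv : Convex ℝ ((L : Set E2) ∩ Bl i) :=
      (AffineSubspace.convex L).inter (convex_closedBall _ _)
    have hm : midpoint ℝ p q ∈ (L : Set E2) ∩ Bl i :=
      hconv.segment_subset ⟨hp.1, hpi⟩ ⟨hq.1, hqi⟩ (midpoint_mem_segment p q)
    rcases hSsub i hm with h | h
    · exact hpq ((midpoint_eq_left_iff ℝ).mp h)
    · exact hpq ((midpoint_eq_right_iff ℝ).mp h)
  obtain ⟨ip, hip⟩ := Set.mem_iUnion.mp hp.2
  obtain ⟨iq, hiq⟩ := Set.mem_iUnion.mp hq.2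
  have hne : ip ≠ iq := by
    intro h
    exact hnotboth ip ⟨hip, h ▸ hiq⟩
  -- tangency at ip and iq
  have htang : ∀ i : Fin n, ∀ x : E2, x ∈ Bl i → x ∈ (L : Set E2) →
      |(inner ℝ u (P i) : ℝ) - c| = rad i := by
    intro i x hxB hxL
    have hxc : (inner ℝ u x : ℝ) = c := (hiff x).mp hxL
    have hle : |(inner ℝ u (P i) : ℝ) - c| ≤ rad i := dist_le_of_mem hu hxc hxB
    rcases lt_or_eq_of_le hle with hlt | heq
    · exfalso
      obtain ⟨a, b, hab, ⟨hac, haB⟩, ⟨hbc, hbB⟩⟩ := line_meets_ball_twice hu hlt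
      have haL : a ∈ (L : Set E2) := (hiff a).mpr (by rw [hac])
      have hbL : b ∈ (L : Set E2) := (hiff b).mpr (by rw [hbc])
      have ha' := hSsub i ⟨haL, haB⟩
      have hb' := hSsub i ⟨hbL, hbB⟩
      have hboth : p ∈ Bl i ∧ q ∈ Bl i := by
        rcases ha' with h1 | h1 <;> rcases hb' with h2 | h2
        · exact absurd (h1.trans h2.symm) hab
        · exact ⟨h1 ▸ haB, h2 ▸ hbB⟩
        · exact ⟨h2 ▸ hbB, h1 ▸ haB⟩
        · exact absurd (h1.trans h2.symm) hab
      exact hnotboth i hboth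
    · exact heq
  have htp : |(inner ℝ u (P ip) : ℝ) - c| = rad ip := htang ip p hip hp.1
  have htq : |(inner ℝ u (P iq) : ℝ) - c| = rad iq := htang iq q hiq hq.1
  -- all other balls miss the line
  have hmiss : ∀ k : Fin n, k ≠ ip → k ≠ iq → rad k < |(inner ℝ u (P k) : ℝ) - c| := by
    intro k hk1 hk2
    by_contra hcon
    push_neg at hcon
    obtain ⟨x, hxc, hxB⟩ := line_meets_ball hu hcon
    have hxL : x ∈ (L : Set E2) := (hiff x).mpr (by rw [hxc])
    rcases hSsub k ⟨hxL, hxB⟩ with h | h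
    · exact (Set.disjoint_left.mp (hdisj hk1) (h ▸ hxB)) hip
    · exact (Set.disjoint_left.mp (hdisj hk2) (h ▸ hxB)) hiq
  obtain ⟨k, hk1, hk2, hk3⟩ := CORE u hu c ip iq hne htp htq
  exact absurd hk3 (not_le.mpr (hmiss k hk1 hk2))

end NoOrd
end

namespace NoOrd
noncomputable section

/-- x-coordinates of the disk centers -/
def Xc (m : ℕ) : ℝ := if m = 0 then 0 else if m = 1 then 141/50 else 141/100
/-- y-coordinates of the disk centers -/
def Yc (n m : ℕ) : ℝ :=
  if m = 0 then 1 else if m = 1 then 1 else if m = 2 then 99/200 else if m = 3 then 301/200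
  else 1 + (2*(m:ℝ) - 3 - (n:ℝ)) * (1/(1000*(n:ℝ)))
/-- radii -/
def Rc (n m : ℕ) : ℝ := if m ≤ 1 then 1 else if m ≤ 3 then 99/200 else 1/(2000*(n:ℝ))

lemma Yc_E_bound {n m : ℕ} (h4 : 4 ≤ m) (hm : m < n) : |Yc n m - 1| ≤ 1/1000 := by
  have h5 : (5:ℝ) ≤ (n:ℝ) := by exact_mod_cast Nat.succ_le_of_lt (lt_of_le_of_lt h4 hm)
  have hj1 : (m:ℝ) ≤ (n:ℝ) - 1 := by
    have : m + 1 ≤ n := hm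
    have := (Nat.cast_le (α := ℝ)).mpr this
    push_cast at this; linarith
  have hj4 : (4:ℝ) ≤ (m:ℝ) := by exact_mod_cast h4
  have hnpos : (0:ℝ) < 1000*(n:ℝ) := by linarith
  rw [Yc, if_neg (by omega), if_neg (by omega), if_neg (by omega), if_neg (by omega)]
  rw [abs_le]
  constructor
  · rw [show (1:ℝ) + (2*(m:ℝ) - 3 - n) * (1/(1000*n)) - 1 = (2*(m:ℝ) - 3 - n) / (1000*n) by ring]
    rw [le_div_iff₀ hnpos]
    nlinarith
  · rw [show (1:ℝ) + (2*(m:ℝ) - 3 - n) * (1/(1000*n)) - 1 = (2*(m:ℝ) - 3 - n) / (1000*n) by ring]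
    rw [div_le_iff₀ hnpos]
    nlinarith

lemma tau_pos {n : ℕ} (hn : 4 ≤ n) : 0 < 1/(2000*(n:ℝ)) := by
  have : (4:ℝ) ≤ (n:ℝ) := by exact_mod_cast hn
  positivity

lemma tau_le {n : ℕ} (hn : 4 ≤ n) : 1/(2000*(n:ℝ)) ≤ 1/2000 := by
  have h : (4:ℝ) ≤ (n:ℝ) := by exact_mod_cast hn
  rw [div_le_div_iff₀ (by linarith) (by norm_num)]
  nlinarith

/-- The core blocking lemma over ℕ indices, assuming i < j. -/
lemma core_lt (n : ℕ) (hn : 4 ≤ n) (u₁ u₂ c : ℝ) (hu : u₁^2 + u₂^2 = 1)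
    (i j : ℕ) (hi : i < n) (hj : j < n) (hij : i < j)
    (hti : |u₁ * Xc i + u₂ * Yc n i - c| = Rc n i)
    (htj : |u₁ * Xc j + u₂ * Yc n j - c| = Rc n j) :
    ∃ k, k < n ∧ k ≠ i ∧ k ≠ j ∧ |u₁ * Xc k + u₂ * Yc n k - c| ≤ Rc n k := by
  -- abbreviations for the four special disks
  have e0 : u₁ * Xc 0 + u₂ * Yc n 0 - c = u₂ - c := by
    rw [Xc, Yc]; norm_num
  have e1 : u₁ * Xc 1 + u₂ * Yc n 1 - c = (141/50)*u₁ + u₂ - c := by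
    rw [Xc, Yc]; norm_num; ring
  have e2 : u₁ * Xc 2 + u₂ * Yc n 2 - c = (141/100)*u₁ + (99/200)*u₂ - c := by
    rw [Xc, Yc]; norm_num; ring
  have e3 : u₁ * Xc 3 + u₂ * Yc n 3 - c = (141/100)*u₁ + (301/200)*u₂ - c := by
    rw [Xc, Yc]; norm_num; ring
  have r0 : Rc n 0 = 1 := by rw [Rc]; norm_num
  have r1 : Rc n 1 = 1 := by rw [Rc]; norm_num
  have r2 : Rc n 2 = 99/200 := by rw [Rc]; norm_num
  have r3 : Rc n 3 = 99/200 := by rw [Rc]; norm_num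
  by_cases hj4 : 4 ≤ j
  · -- j is a small E-disk
    have hXj : Xc j = 141/100 := by rw [Xc, if_neg (by omega), if_neg (by omega)]
    have hRj : Rc n j = 1/(2000*(n:ℝ)) := by rw [Rc, if_neg (by omega), if_neg (by omega)]
    have htj' : |(141/100)*u₁ + (Yc n j)*u₂ - c| = 1/(2000*(n:ℝ)) := by
      rw [show (141/100)*u₁ + (Yc n j)*u₂ - c = u₁ * Xc j + u₂ * Yc n j - c by rw [hXj]; ring]
      rw [htj, hRj]
    have he := Yc_E_bound hj4 hj
    by_cases habs : |u₂| ≤ 9/10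
    · have hB := arith_E_A hu he (tau_pos hn) (tau_le hn) habs htj'
      by_cases hi2 : i = 2
      · exfalso
        rw [hi2, e2, r2] at hti
        rw [hti] at hB
        exact lt_irrefl _ hB
      · exact ⟨2, by omega, by omega, by omega, by rw [e2, r2]; exact le_of_lt hB⟩
    · have hL := arith_E_B hu he (tau_pos hn) (tau_le hn) (le_of_not_ge habs) htj'
      by_cases hi0 : i = 0
      · exfalso
        rw [hi0, e0, r0] at hti
        rw [hti] at hL
        exact lt_irrefl _ hL
      · exact ⟨0, by omega, by omega, by omega, by rw [e0, r0]; exact le_of_lt hL⟩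
  · -- both i < j ≤ 3
    have hj3 : j ≤ 3 := by omega
    interval_cases j <;> interval_cases i
    · -- (0,1)
      rw [e0, r0] at hti; rw [e1, r1] at htj
      rcases arith_LR hu hti htj with h | h
      · exact ⟨2, by omega, by omega, by omega, by rw [e2, r2]; exact h⟩
      · exact ⟨3, by omega, by omega, by omega, by rw [e3, r3]; exact h⟩
    · -- (0,2)
      rw [e0, r0] at hti; rw [e2, r2] at htj
      rcases arith_LB hu hti htj with h | h
      · exact ⟨1, by omega, by omega, by omega, by rw [e1, r1]; exact h⟩
      · exact ⟨3, by omega, by omega, by omega, by rw [e3, r3]; exact h⟩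
    · -- (1,2)
      rw [e1, r1] at hti; rw [e2, r2] at htj
      rcases arith_RB hu hti htj with h | h
      · exact ⟨0, by omega, by omega, by omega, by rw [e0, r0]; exact h⟩
      · exact ⟨3, by omega, by omega, by omega, by rw [e3, r3]; exact h⟩
    · -- (0,3)
      rw [e0, r0] at hti; rw [e3, r3] at htj
      rcases arith_LT hu hti htj with h | h
      · exact ⟨1, by omega, by omega, by omega, by rw [e1, r1]; exact h⟩
      · exact ⟨2, by omega, by omega, by omega, by rw [e2, r2]; exact h⟩
    · -- (1,3)
      rw [e1, r1] at hti; rw [e3, r3] at htj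
      rcases arith_RT hu hti htj with h | h
      · exact ⟨0, by omega, by omega, by omega, by rw [e0, r0]; exact h⟩
      · exact ⟨2, by omega, by omega, by omega, by rw [e2, r2]; exact h⟩
    · -- (2,3)
      rw [e2, r2] at hti; rw [e3, r3] at htj
      rcases arith_BT hu hti htj with h | h
      · exact ⟨0, by omega, by omega, by omega, by rw [e0, r0]; exact h⟩
      · exact ⟨1, by omega, by omega, by omega, by rw [e1, r1]; exact h⟩

end
end NoOrd

namespace NoOrd
noncomputable section

def pt (x y : ℝ) : E2 := !₂[x,y]

lemma pt_apply0 (x y : ℝ) : pt x y 0 = x := rfl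
lemma pt_apply1 (x y : ℝ) : pt x y 1 = y := rfl

lemma dist_pts (x1 y1 x2 y2 : ℝ) :
    dist (pt x1 y1) (pt x2 y2) = Real.sqrt ((x1-x2)^2 + (y1-y2)^2) := by
  have h := EuclideanSpace.dist_eq (pt x1 y1) (pt x2 y2)
  rw [Fin.sum_univ_two] at h
  rw [h]
  congr 1
  show dist x1 x2 ^ 2 + dist y1 y2 ^2 = _
  rw [Real.dist_eq, Real.dist_eq, sq_abs, sq_abs]

lemma lt_sqrt_of_sq_lt {s a b : ℝ} (hs : 0 ≤ s) (h : s^2 < a^2 + b^2) :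
    s < Real.sqrt (a^2+b^2) := by
  nlinarith [Real.sq_sqrt (show (0:ℝ) ≤ a^2+b^2 by positivity), Real.sqrt_nonneg (a^2+b^2)]

lemma lt_sqrt_of_lt_abs_left {s a b : ℝ} (h : s < |a|) : s < Real.sqrt (a^2+b^2) := by
  have h2 : |a| ≤ Real.sqrt (a^2+b^2) := by
    rw [← Real.sqrt_sq_eq_abs]
    exact Real.sqrt_le_sqrt (by nlinarith [sq_nonneg b])
  linarith

lemma lt_sqrt_of_lt_abs_right {s a b : ℝ} (h : s < |b|) : s < Real.sqrt (a^2+b^2) := by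
  have h2 : |b| ≤ Real.sqrt (a^2+b^2) := by
    rw [← Real.sqrt_sq_eq_abs]
    exact Real.sqrt_le_sqrt (by nlinarith [sq_nonneg a])
  linarith

lemma disj_lt (n : ℕ) (hn : 4 ≤ n) (i j : ℕ) (hi : i < n) (hj : j < n) (hij : i < j) :
    Rc n i + Rc n j < Real.sqrt ((Xc i - Xc j)^2 + (Yc n i - Yc n j)^2) := by
  have hn' : (4:ℝ) ≤ (n:ℝ) := by exact_mod_cast hn
  have hτpos := tau_pos hn
  have hτle := tau_le hn
  by_cases hj4 : 4 ≤ j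
  · have hXj : Xc j = 141/100 := by rw [Xc, if_neg (by omega), if_neg (by omega)]
    have hRj : Rc n j = 1/(2000*(n:ℝ)) := by rw [Rc, if_neg (by omega), if_neg (by omega)]
    have heYj := Yc_E_bound hj4 hj
    rw [abs_le] at heYj
    obtain ⟨heY1, heY2⟩ := heYj
    by_cases hi4 : 4 ≤ i
    · -- both E-disks
      have hXi : Xc i = 141/100 := by rw [Xc, if_neg (by omega), if_neg (by omega)]
      have hRi : Rc n i = 1/(2000*(n:ℝ)) := by rw [Rc, if_neg (by omega), if_neg (by omega)]
      have hYi : Yc n i = 1 + (2*(i:ℝ) - 3 - (n:ℝ)) * (1/(1000*(n:ℝ))) := by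
        rw [Yc, if_neg (by omega), if_neg (by omega), if_neg (by omega), if_neg (by omega)]
      have hYj : Yc n j = 1 + (2*(j:ℝ) - 3 - (n:ℝ)) * (1/(1000*(n:ℝ))) := by
        rw [Yc, if_neg (by omega), if_neg (by omega), if_neg (by omega), if_neg (by omega)]
      have hij' : (i:ℝ) + 1 ≤ (j:ℝ) := by exact_mod_cast hij
      have hnpos : (0:ℝ) < 1000*(n:ℝ) := by linarith
      rw [hRi, hRj]
      apply lt_sqrt_of_lt_abs_right
      have hdiff : Yc n i - Yc n j = (2*(i:ℝ) - 2*(j:ℝ)) * (1/(1000*(n:ℝ))) := by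
        rw [hYi, hYj]; ring
      rw [hdiff, abs_mul, abs_of_pos (show (0:ℝ) < 1/(1000*(n:ℝ)) by positivity)]
      have h2 : (2:ℝ) ≤ |2*(i:ℝ) - 2*(j:ℝ)| := by
        rw [abs_sub_comm, abs_of_nonneg (by linarith)]; linarith
      have hpos1 : (0:ℝ) < 1/(1000*(n:ℝ)) := by positivity
      have heq12 : (1:ℝ)/(2000*(n:ℝ)) = (1/2)*(1/(1000*(n:ℝ))) := by
        field_simp; ring
      have h3 : 1/(2000*(n:ℝ)) + 1/(2000*(n:ℝ)) < 2 * (1/(1000*(n:ℝ))) := by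
        rw [heq12]; linarith
      calc 1/(2000*(n:ℝ)) + 1/(2000*(n:ℝ)) < 2 * (1/(1000*(n:ℝ))) := h3
        _ ≤ |2*(i:ℝ) - 2*(j:ℝ)| * (1/(1000*(n:ℝ))) :=
            mul_le_mul_of_nonneg_right h2 (by positivity)
    · -- i ≤ 3, j an E-disk
      interval_cases i
      · rw [show Xc 0 = 0 by rw [Xc]; norm_num, show Rc n 0 = 1 by rw [Rc]; norm_num, hRj, hXj]
        apply lt_sqrt_of_lt_abs_left
        rw [show (0:ℝ) - 141/100 = -(141/100) by ring, abs_neg,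
          abs_of_pos (by norm_num : (0:ℝ) < 141/100)]
        linarith
      · rw [show Xc 1 = 141/50 by rw [Xc]; norm_num, show Rc n 1 = 1 by rw [Rc]; norm_num, hRj, hXj]
        apply lt_sqrt_of_lt_abs_left
        rw [show (141:ℝ)/50 - 141/100 = 141/100 by ring,
          abs_of_pos (by norm_num : (0:ℝ) < 141/100)]
        linarith
      · rw [show Xc 2 = 141/100 by rw [Xc]; norm_num, show Rc n 2 = 99/200 by rw [Rc]; norm_num,
          hRj, show Yc n 2 = 99/200 by rw [Yc]; norm_num]
        apply lt_sqrt_of_lt_abs_right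
        rw [abs_sub_comm, abs_of_pos (by linarith)]
        linarith
      · rw [show Xc 3 = 141/100 by rw [Xc]; norm_num, show Rc n 3 = 99/200 by rw [Rc]; norm_num,
          hRj, show Yc n 3 = 301/200 by rw [Yc]; norm_num]
        apply lt_sqrt_of_lt_abs_right
        rw [abs_of_pos (by linarith)]
        linarith
  · -- both among the four big disks
    have hj3 : j ≤ 3 := by omega
    interval_cases j <;> interval_cases i
    · rw [show Xc 0 = 0 by rw [Xc]; norm_num, show Xc 1 = 141/50 by rw [Xc]; norm_num,
        show Yc n 0 = 1 by rw [Yc]; norm_num, show Yc n 1 = 1 by rw [Yc]; norm_num,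
        show Rc n 0 = 1 by rw [Rc]; norm_num, show Rc n 1 = 1 by rw [Rc]; norm_num]
      apply lt_sqrt_of_sq_lt (by norm_num)
      norm_num
    · rw [show Xc 0 = 0 by rw [Xc]; norm_num, show Xc 2 = 141/100 by rw [Xc]; norm_num,
        show Yc n 0 = 1 by rw [Yc]; norm_num, show Yc n 2 = 99/200 by rw [Yc]; norm_num,
        show Rc n 0 = 1 by rw [Rc]; norm_num, show Rc n 2 = 99/200 by rw [Rc]; norm_num]
      apply lt_sqrt_of_sq_lt (by norm_num)
      norm_num
    · rw [show Xc 1 = 141/50 by rw [Xc]; norm_num, show Xc 2 = 141/100 by rw [Xc]; norm_num,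
        show Yc n 1 = 1 by rw [Yc]; norm_num, show Yc n 2 = 99/200 by rw [Yc]; norm_num,
        show Rc n 1 = 1 by rw [Rc]; norm_num, show Rc n 2 = 99/200 by rw [Rc]; norm_num]
      apply lt_sqrt_of_sq_lt (by norm_num)
      norm_num
    · rw [show Xc 0 = 0 by rw [Xc]; norm_num, show Xc 3 = 141/100 by rw [Xc]; norm_num,
        show Yc n 0 = 1 by rw [Yc]; norm_num, show Yc n 3 = 301/200 by rw [Yc]; norm_num,
        show Rc n 0 = 1 by rw [Rc]; norm_num, show Rc n 3 = 99/200 by rw [Rc]; norm_num]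
      apply lt_sqrt_of_sq_lt (by norm_num)
      norm_num
    · rw [show Xc 1 = 141/50 by rw [Xc]; norm_num, show Xc 3 = 141/100 by rw [Xc]; norm_num,
        show Yc n 1 = 1 by rw [Yc]; norm_num, show Yc n 3 = 301/200 by rw [Yc]; norm_num,
        show Rc n 1 = 1 by rw [Rc]; norm_num, show Rc n 3 = 99/200 by rw [Rc]; norm_num]
      apply lt_sqrt_of_sq_lt (by norm_num)
      norm_num
    · rw [show Xc 2 = 141/100 by rw [Xc]; norm_num, show Xc 3 = 141/100 by rw [Xc]; norm_num,
        show Yc n 2 = 99/200 by rw [Yc]; norm_num, show Yc n 3 = 301/200 by rw [Yc]; norm_num,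
        show Rc n 2 = 99/200 by rw [Rc]; norm_num, show Rc n 3 = 99/200 by rw [Rc]; norm_num]
      apply lt_sqrt_of_sq_lt (by norm_num)
      norm_num
end
end NoOrd

theorem convex_system_plane_no_ordinary_line (n : ℕ) (hn : 3 < n) :
    ∃ K : Fin n → Set (EuclideanSpace ℝ (Fin 2)),
      (Pairwise fun i j => Disjoint (K i) (K j)) ∧
      (∀ i, IsCompact (K i)) ∧
      (∀ i, StrictConvex ℝ (K i)) ∧
      (∀ i, (interior (K i)).Nonempty) ∧
      ∀ L : AffineSubspace ℝ (EuclideanSpace ℝ (Fin 2)), IsLine L →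
        ¬ ∃ p q, p ≠ q ∧ (L : Set (EuclideanSpace ℝ (Fin 2))) ∩ (⋃ i, K i) = {p, q} := by
  classical
  have hn4 : 4 ≤ n := hn
  set P : Fin n → E2 := fun i => NoOrd.pt (NoOrd.Xc i.val) (NoOrd.Yc n i.val) with hP
  set rad : Fin n → ℝ := fun i => NoOrd.Rc n i.val with hrad
  have hr : ∀ i, 0 < rad i := by
    intro i
    rw [hrad]
    simp only [NoOrd.Rc]
    split_ifs
    · norm_num
    · norm_num
    · exact NoOrd.tau_pos hn4
  have hdist : ∀ i j : Fin n, dist (P i) (P j) =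
      Real.sqrt ((NoOrd.Xc i.val - NoOrd.Xc j.val)^2 + (NoOrd.Yc n i.val - NoOrd.Yc n j.val)^2) :=
    fun i j => NoOrd.dist_pts _ _ _ _
  have hdisj : Pairwise fun i j : Fin n =>
      Disjoint (Metric.closedBall (P i) (rad i)) (Metric.closedBall (P j) (rad j)) := by
    intro i j hij
    have hvne : i.val ≠ j.val := fun h => hij (Fin.val_injective h)
    rcases lt_or_gt_of_ne hvne with h | h
    · apply Metric.closedBall_disjoint_closedBall
      rw [hdist]
      exact NoOrd.disj_lt n hn4 i.val j.val i.isLt j.isLt h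
    · apply Disjoint.symm
      apply Metric.closedBall_disjoint_closedBall
      rw [hdist]
      exact NoOrd.disj_lt n hn4 j.val i.val j.isLt i.isLt h
  refine ⟨fun i => Metric.closedBall (P i) (rad i), hdisj,
    fun i => isCompact_closedBall _ _,
    fun i => strictConvex_closedBall ℝ _ _,
    fun i => ?_, ?_⟩
  · rw [interior_closedBall _ (ne_of_gt (hr i))]
    exact Metric.nonempty_ball.mpr (hr i)
  · intro L hL
    apply NoOrd.no_ordinary n P rad hr hdisj ?_ L hL
    intro u hu c i j hij hti htj
    have hu' : (u 0)^2 + (u 1)^2 = 1 := by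
      rw [← norm_sq_eq2, hu]; norm_num
    have hinner : ∀ k : Fin n, (inner ℝ u (P k) : ℝ) =
        u 0 * NoOrd.Xc k.val + u 1 * NoOrd.Yc n k.val := by
      intro k
      rw [inner_eq2]
      rfl
    rw [hinner i] at hti
    rw [hinner j] at htj
    have hvne : i.val ≠ j.val := fun h => hij (Fin.val_injective h)
    rcases lt_or_gt_of_ne hvne with h | h
    · obtain ⟨k, hkn, hki, hkj, hkle⟩ :=
        NoOrd.core_lt n hn4 (u 0) (u 1) c hu' i.val j.val i.isLt j.isLt h hti htj
      refine ⟨⟨k, hkn⟩, fun hc => hki (congrArg Fin.val hc), fun hc => hkj (congrArg Fin.val hc), ?_⟩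
      rw [hinner ⟨k, hkn⟩]
      exact hkle
    · obtain ⟨k, hkn, hkj, hki, hkle⟩ :=
        NoOrd.core_lt n hn4 (u 0) (u 1) c hu' j.val i.val j.isLt i.isLt h htj hti
      refine ⟨⟨k, hkn⟩, fun hc => hki (congrArg Fin.val hc), fun hc => hkj (congrArg Fin.val hc), ?_⟩
      rw [hinner ⟨k, hkn⟩]
      exact hkle
end

section
/- Let d ≥ 3, n ≥ 2, and let K₁, …, Kₙ be pairwise disjoint, compact, strictly convex subsets of ℝ^d, each with nonempty interior. Then there exists an ordinary line, i.e. an affine line L in ℝ^d such that L ∩ (K₁ ∪ ⋯ ∪ Kₙ) consists of exactly two points. -/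
open scoped RealInnerProductSpace

section Aux

variable {V : Type*} [NormedAddCommGroup V] [InnerProductSpace ℝ V]

/-- The support-type value of a set in direction `w`. -/
noncomputable def sval (K : Set V) (w : V) : ℝ :=
  sSup ((fun x => ⟪w, x⟫) '' K)

theorem sval_isGreatest {K : Set V} (hK : IsCompact K) (hne : K.Nonempty) (w : V) :
    IsGreatest ((fun x => ⟪w, x⟫) '' K) (sval K w) := by
  have hc : IsCompact ((fun x => ⟪w, x⟫) '' K) :=
    hK.image (continuous_const.inner continuous_id)
  exact hc.isGreatest_sSup (hne.image _)

theorem le_sval {K : Set V} (hK : IsCompact K) (hne : K.Nonempty) {w x : V} (hx : x ∈ K) :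
    ⟪w, x⟫ ≤ sval K w :=
  (sval_isGreatest hK hne w).2 ⟨x, hx, rfl⟩

theorem sval_le {K : Set V} (hK : IsCompact K) (hne : K.Nonempty) {w : V} {m : ℝ}
    (h : ∀ x ∈ K, ⟪w, x⟫ ≤ m) : sval K w ≤ m := by
  rcases (sval_isGreatest hK hne w).1 with ⟨a, ha, hav⟩
  exact hav ▸ h a ha

theorem exists_sval_eq {K : Set V} (hK : IsCompact K) (hne : K.Nonempty) (w : V) :
    ∃ a ∈ K, sval K w = ⟪w, a⟫ := by
  rcases (sval_isGreatest hK hne w).1 with ⟨a, ha, hav⟩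
  exact ⟨a, ha, hav.symm⟩

theorem sval_continuous {K : Set V} (hK : IsCompact K) (hne : K.Nonempty) :
    Continuous (sval K) := by
  obtain ⟨C, hC⟩ := isBounded_iff_forall_norm_le.1 hK.isBounded
  have key : ∀ w w' : V, sval K w - sval K w' ≤ C * ‖w - w'‖ := by
    intro w w'
    obtain ⟨a, ha, hav⟩ := exists_sval_eq hK hne w
    have h1 : ⟪w, a⟫ - ⟪w', a⟫ = ⟪w - w', a⟫ := by
      rw [inner_sub_left]
    have h2 : ⟪w - w', a⟫ ≤ ‖w - w'‖ * ‖a‖ := real_inner_le_norm _ _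
    have h3 : ‖w - w'‖ * ‖a‖ ≤ ‖w - w'‖ * C :=
      mul_le_mul_of_nonneg_left (hC a ha) (norm_nonneg _)
    have h4 : ⟪w', a⟫ ≤ sval K w' := le_sval hK hne ha
    nlinarith [hav]
  have hC0 : 0 ≤ C := by
    obtain ⟨x, hx⟩ := hne
    exact le_trans (norm_nonneg x) (hC x hx)
  have : LipschitzWith (Real.toNNReal C) (sval K) := by
    apply LipschitzWith.of_dist_le_mul
    intro w w'
    rw [Real.dist_eq, Real.coe_toNNReal C hC0, dist_eq_norm]
    rw [abs_sub_le_iff]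
    constructor
    · exact key w w'
    · calc sval K w' - sval K w ≤ C * ‖w' - w‖ := key w' w
        _ = C * ‖w - w'‖ := by rw [norm_sub_rev]
  exact this.continuous

/-- Tie-set lemma: two disjoint compact sets (one convex) cannot have equal
support values on a set with nonempty interior. -/
theorem tie_interior_empty [CompleteSpace V] {A B : Set V}
    (hA : IsCompact A) (hAne : A.Nonempty)
    (hB : IsCompact B) (hBconv : Convex ℝ B) (hBne : B.Nonempty)
    (hdisj : Disjoint A B) :
    interior {w : V | sval A w = sval B w} = ∅ := by
  by_contra h
  obtain ⟨ξ₀, hξ₀⟩ := Set.nonempty_iff_ne_empty.2 h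
  set U := interior {w : V | sval A w = sval B w} with hU
  have hUopen : IsOpen U := isOpen_interior
  have hUtie : ∀ w ∈ U, sval A w = sval B w := by
    intro w hw
    have : w ∈ {w : V | sval A w = sval B w} := interior_subset hw
    exact this
  obtain ⟨a, ha, hav⟩ := exists_sval_eq hA hAne ξ₀
  have haB : a ∉ B := fun haB => (Set.disjoint_left.1 hdisj ha) haB
  obtain ⟨f, u, hfb, hfa⟩ :=
    geometric_hahn_banach_closed_point hBconv hB.isClosed haB
  set z := (InnerProductSpace.toDual ℝ V).symm f with hz
  have hzf : ∀ x : V, ⟪z, x⟫ = f x := fun x => InnerProductSpace.toDual_symm_apply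
  obtain ⟨ε, hε, hball⟩ := Metric.isOpen_iff.1 hUopen ξ₀ hξ₀
  set t := ε / (2 * (‖z‖ + 1)) with ht
  have hzpos : (0:ℝ) < ‖z‖ + 1 := by positivity
  have htpos : 0 < t := by positivity
  have hξt : ξ₀ + t • z ∈ U := by
    apply hball
    rw [Metric.mem_ball, dist_eq_norm]
    have : ξ₀ + t • z - ξ₀ = t • z := by abel
    rw [this, norm_smul, Real.norm_eq_abs, abs_of_pos htpos]
    calc t * ‖z‖ < t * (‖z‖ + 1) := by nlinarith
      _ = ε / 2 := by rw [ht]; field_simp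
      _ < ε := by linarith
  set ξt := ξ₀ + t • z with hξtdef
  obtain ⟨b, hb, hbv⟩ := exists_sval_eq hB hBne ξt
  -- chain
  have h1 : ⟪ξt, a⟫ ≤ sval A ξt := le_sval hA hAne ha
  have h2 : sval A ξt = sval B ξt := hUtie _ hξt
  have h3 : sval B ξt = ⟪ξ₀, b⟫ + t * ⟪z, b⟫ := by
    rw [hbv, hξtdef, inner_add_left, real_inner_smul_left]
  have h4 : ⟪ξ₀, b⟫ ≤ sval B ξ₀ := le_sval hB hBne hb
  have h5 : sval B ξ₀ = sval A ξ₀ := (hUtie ξ₀ hξ₀).symm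
  have h6 : ⟪ξt, a⟫ = ⟪ξ₀, a⟫ + t * ⟪z, a⟫ := by
    rw [hξtdef, inner_add_left, real_inner_smul_left]
  have h7 : sval A ξ₀ = ⟪ξ₀, a⟫ := hav
  have hlt : ⟪z, b⟫ < ⟪z, a⟫ := by
    rw [hzf, hzf]; exact lt_trans (hfb b hb) hfa
  nlinarith

theorem interior_lt_sval {K : Set V} (hK : IsCompact K) (hne : K.Nonempty) {x w : V}
    (hx : x ∈ interior K) (hw : w ≠ 0) : ⟪w, x⟫ < sval K w := by
  obtain ⟨ε, hε, hball⟩ := Metric.mem_nhds_iff.1 (mem_interior_iff_mem_nhds.1 hx)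
  have hwn : (0:ℝ) < ‖w‖ := norm_pos_iff.2 hw
  set x' := x + (ε / 2) • ‖w‖⁻¹ • w with hx'
  have hx'K : x' ∈ K := by
    apply hball
    rw [Metric.mem_ball, dist_eq_norm]
    have : x' - x = (ε / 2) • ‖w‖⁻¹ • w := by rw [hx']; abel
    rw [this, norm_smul, norm_smul, Real.norm_eq_abs, Real.norm_eq_abs,
      abs_of_pos (by linarith : (0:ℝ) < ε / 2), abs_of_pos (by positivity)]
    rw [inv_mul_cancel₀ (ne_of_gt hwn), mul_one]
    linarith
  have hval : ⟪w, x'⟫ = ⟪w, x⟫ + (ε / 2) * ‖w‖ := by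
    rw [hx', inner_add_right, real_inner_smul_right, real_inner_smul_right,
      real_inner_self_eq_norm_mul_norm]
    field_simp
  have h1 : ⟪w, x'⟫ ≤ sval K w := le_sval hK hne hx'K
  nlinarith

theorem exists_avoid {ι : Type*} [Fintype ι] [DecidableEq ι] {X : Type*} [TopologicalSpace X]
    (Z : ι → Set X) (hZc : ∀ i, IsClosed (Z i)) (hZi : ∀ i, interior (Z i) = ∅)
    {O : Set X} (hO : IsOpen O) (hOne : O.Nonempty) : ∃ ξ ∈ O, ∀ i, ξ ∉ Z i := by
  have H : ∀ s : Finset ι, ∀ O : Set X, IsOpen O → O.Nonempty →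
      ∃ ξ ∈ O, ∀ i ∈ s, ξ ∉ Z i := by
    intro s
    induction s using Finset.induction_on with
    | empty => intro O hO hOne; obtain ⟨ξ, hξ⟩ := hOne; exact ⟨ξ, hξ, by simp⟩
    | insert a s hni ih =>
      intro O hO hOne
      have hO' : IsOpen (O \ Z a) := hO.sdiff (hZc a)
      have hOne' : (O \ Z a).Nonempty := by
        by_contra h
        have h1 : O ⊆ Z a := by
          rw [Set.not_nonempty_iff_eq_empty, Set.diff_eq_empty] at h
          exact h
        have h2 : O ⊆ interior (Z a) := interior_maximal h1 hO
        rw [hZi a] at h2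
        exact hOne.ne_empty (Set.subset_empty_iff.1 h2)
      obtain ⟨ξ, hξO, hξ⟩ := ih (O \ Z a) hO' hOne'
      refine ⟨ξ, hξO.1, ?_⟩
      intro i hi
      rcases Finset.mem_insert.1 hi with rfl | hi
      · exact hξO.2
      · exact hξ i hi
  obtain ⟨ξ, hξO, hξ⟩ := H Finset.univ O hO hOne
  exact ⟨ξ, hξO, fun i => hξ i (Finset.mem_univ i)⟩

theorem unique_max_slice {K : Set V} (hK : StrictConvex ℝ K) {ξ w : V} (hw : w ≠ 0)
    (hortho : ⟪ξ, w⟫ = 0) {u s : ℝ} {x y : V} (hx : x ∈ K) (hy : y ∈ K)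
    (hxH : ⟪ξ, x⟫ = u) (hyH : ⟪ξ, y⟫ = u) (hxv : ⟪w, x⟫ = s) (hyv : ⟪w, y⟫ = s)
    (hmax : ∀ z ∈ K, ⟪ξ, z⟫ = u → ⟪w, z⟫ ≤ s) : x = y := by
  by_contra hne
  have hm : (1/2 : ℝ) • x + (1/2 : ℝ) • y ∈ interior K :=
    hK hx hy hne (by norm_num) (by norm_num) (by norm_num)
  set m := (1/2 : ℝ) • x + (1/2 : ℝ) • y with hmdef
  obtain ⟨ε, hε, hball⟩ := Metric.mem_nhds_iff.1 (mem_interior_iff_mem_nhds.1 hm)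
  have hwn : (0:ℝ) < ‖w‖ := norm_pos_iff.2 hw
  set m' := m + (ε / 2) • ‖w‖⁻¹ • w with hm'def
  have hm'K : m' ∈ K := by
    apply hball
    rw [Metric.mem_ball, dist_eq_norm]
    have : m' - m = (ε / 2) • ‖w‖⁻¹ • w := by rw [hm'def]; abel
    rw [this, norm_smul, norm_smul, Real.norm_eq_abs, Real.norm_eq_abs,
      abs_of_pos (by linarith : (0:ℝ) < ε / 2), abs_of_pos (by positivity)]
    rw [inv_mul_cancel₀ (ne_of_gt hwn), mul_one]
    linarith
  have hmξ : ⟪ξ, m⟫ = u := by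
    rw [hmdef, inner_add_right, real_inner_smul_right, real_inner_smul_right, hxH, hyH]
    ring
  have hm'ξ : ⟪ξ, m'⟫ = u := by
    rw [hm'def, inner_add_right, real_inner_smul_right, real_inner_smul_right, hortho, hmξ]
    ring
  have hmw : ⟪w, m⟫ = s := by
    rw [hmdef, inner_add_right, real_inner_smul_right, real_inner_smul_right, hxv, hyv]
    ring
  have hm'w : ⟪w, m'⟫ = s + (ε / 2) * ‖w‖ := by
    rw [hm'def, inner_add_right, real_inner_smul_right, real_inner_smul_right,
      real_inner_self_eq_norm_mul_norm, hmw]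
    field_simp
  have := hmax m' hm'K hm'ξ
  rw [hm'w] at this
  nlinarith

end Aux

theorem convex_system_high_dim (d n : ℕ) (hd : 3 ≤ d) (hn : 2 ≤ n)
    (K : Fin n → Set (EuclideanSpace ℝ (Fin d)))
    (hdisj : Pairwise fun i j => Disjoint (K i) (K j))
    (hcpt : ∀ i, IsCompact (K i))
    (hsc : ∀ i, StrictConvex ℝ (K i))
    (hint : ∀ i, (interior (K i)).Nonempty) :
    ∃ L : AffineSubspace ℝ (EuclideanSpace ℝ (Fin d)), IsLine L ∧
      ∃ p q, p ≠ q ∧ (L : Set (EuclideanSpace ℝ (Fin d))) ∩ (⋃ i, K i) = {p, q} := by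
  classical
  have hne : ∀ i, (K i).Nonempty := fun i => (hint i).mono interior_subset
  have hn0 : 0 < n := by omega
  have hn1 : 1 < n := by omega
  set i₀ : Fin n := ⟨0, hn0⟩ with hi₀
  set i₁ : Fin n := ⟨1, hn1⟩ with hi₁
  have hi01 : i₀ ≠ i₁ := by simp [hi₀, hi₁, Fin.ext_iff]
  obtain ⟨x, hx⟩ := hint i₀
  obtain ⟨y, hy⟩ := hint i₁
  have hxy : x ≠ y := by
    intro h
    exact Set.disjoint_left.1 (hdisj hi01) (interior_subset hx) (h ▸ interior_subset hy)
  -- a direction orthogonal to x - y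
  obtain ⟨v, hvmem, hv0⟩ : ∃ v, v ∈ (ℝ ∙ (x - y))ᗮ ∧ v ≠ 0 := by
    have h1 := Submodule.finrank_add_finrank_orthogonal (K := (ℝ ∙ (x - y)))
    rw [finrank_euclideanSpace_fin, finrank_span_singleton (sub_ne_zero.2 hxy)] at h1
    have h3 : (ℝ ∙ (x - y))ᗮ ≠ ⊥ := by
      intro h
      rw [h, finrank_bot] at h1
      omega
    exact Submodule.exists_mem_ne_zero_of_ne_bot h3
  have hvxy : ⟪v, x⟫ = ⟪v, y⟫ := by
    have h1 : ⟪x - y, v⟫ = 0 := Submodule.mem_orthogonal_singleton_iff_inner_right.1 hvmem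
    have h2 : ⟪v, x - y⟫ = 0 := by rw [real_inner_comm]; exact h1
    rw [inner_sub_right] at h2
    linarith
  -- support and "anti-support" values
  set sv : Fin n → EuclideanSpace ℝ (Fin d) → ℝ := fun i w => sval (K i) w with hsv
  set bv : Fin n → EuclideanSpace ℝ (Fin d) → ℝ := fun i w => - sval (K i) (-w) with hbv
  have hsvc : ∀ i, Continuous (sv i) := fun i => sval_continuous (hcpt i) (hne i)
  have hbvc : ∀ i, Continuous (bv i) := fun i =>
    ((sval_continuous (hcpt i) (hne i)).comp continuous_neg).neg
  have hkey : ∀ (i : Fin n) (w : EuclideanSpace ℝ (Fin d)) {z}, z ∈ K i →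
      bv i w ≤ ⟪w, z⟫ ∧ ⟪w, z⟫ ≤ sv i w := by
    intro i w z hz
    constructor
    · have h := le_sval (hcpt i) (hne i) (w := -w) hz
      rw [inner_neg_left] at h
      simp only [hbv]
      linarith
    · exact le_sval (hcpt i) (hne i) hz
  have hstrict : ∀ (i : Fin n) (w : EuclideanSpace ℝ (Fin d)), w ≠ 0 → ∀ {z}, z ∈ interior (K i) →
      bv i w < ⟪w, z⟫ ∧ ⟪w, z⟫ < sv i w := by
    intro i w hw z hz
    constructor
    · have h := interior_lt_sval (hcpt i) (hne i) hz (neg_ne_zero.2 hw)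
      rw [inner_neg_left] at h
      simp only [hbv]
      linarith
    · exact interior_lt_sval (hcpt i) (hne i) hz hw
  -- the open overlap condition
  set O : Set (EuclideanSpace ℝ (Fin d)) :=
    {w | bv i₀ w < sv i₀ w ∧ bv i₀ w < sv i₁ w ∧ bv i₁ w < sv i₀ w ∧ bv i₁ w < sv i₁ w}
    with hO
  have hOopen : IsOpen O := by
    have h : O = {w | (bv i₀ w < sv i₀ w ∧ bv i₀ w < sv i₁ w) ∧
        (bv i₁ w < sv i₀ w ∧ bv i₁ w < sv i₁ w)} := by
      ext w
      simp only [hO, Set.mem_setOf_eq]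
      tauto
    rw [h]
    exact ((isOpen_lt (hbvc i₀) (hsvc i₀)).and
      (isOpen_lt (hbvc i₀) (hsvc i₁))).and
      ((isOpen_lt (hbvc i₁) (hsvc i₀)).and
      (isOpen_lt (hbvc i₁) (hsvc i₁)))
  have hvO : v ∈ O := by
    obtain ⟨h1, h2⟩ := hstrict i₀ v hv0 hx
    obtain ⟨h3, h4⟩ := hstrict i₁ v hv0 hy
    rw [hvxy] at h1 h2
    exact ⟨by linarith, by linarith, by linarith, by linarith⟩
  -- generic direction: all support values distinct
  set Z : Fin n × Fin n → Set (EuclideanSpace ℝ (Fin d)) :=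
    fun p => if p.1 = p.2 then ∅ else {w | sv p.1 w = sv p.2 w} with hZ
  have hZc : ∀ p, IsClosed (Z p) := by
    intro p
    rcases eq_or_ne p.1 p.2 with h | h
    · simp only [hZ, if_pos h]; exact isClosed_empty
    · simp only [hZ, if_neg h]; exact isClosed_eq (hsvc p.1) (hsvc p.2)
  have hZi : ∀ p, interior (Z p) = ∅ := by
    intro p
    rcases eq_or_ne p.1 p.2 with h | h
    · simp only [hZ, if_pos h, interior_empty]
    · simp only [hZ, if_neg h]
      exact tie_interior_empty (hcpt p.1) (hne p.1) (hcpt p.2) ((hsc p.2).convex)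
        (hne p.2) (hdisj h)
  obtain ⟨ξ, hξO, hξZ⟩ := exists_avoid Z hZc hZi hOopen ⟨v, hvO⟩
  have htie : ∀ i j : Fin n, i ≠ j → sv i ξ ≠ sv j ξ := by
    intro i j hij
    have h := hξZ (i, j)
    simpa only [hZ, if_neg hij, Set.mem_setOf_eq] using h
  have hξ0 : ξ ≠ 0 := by
    intro h
    have h1 : sv i₀ (0 : EuclideanSpace ℝ (Fin d)) = 0 := by
      apply le_antisymm
      · apply sval_le (hcpt i₀) (hne i₀)
        intro z hz
        simp [inner_zero_left]
      · obtain ⟨z, hz⟩ := hne i₀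
        have h2 := le_sval (hcpt i₀) (hne i₀) (w := (0 : EuclideanSpace ℝ (Fin d))) hz
        simpa [inner_zero_left] using h2
    have h1' : sval (K i₀) (0 : EuclideanSpace ℝ (Fin d)) = 0 := h1
    have h2 : bv i₀ (0 : EuclideanSpace ℝ (Fin d)) = 0 := by
      simp only [hbv, neg_zero, h1']
    have h3 := hξO.1
    rw [h] at h3
    rw [h1, h2] at h3
    exact lt_irrefl 0 h3
  -- intervals along ξ
  set tt : Fin n → ℝ := fun i => sv i ξ with htt
  set bb : Fin n → ℝ := fun i => bv i ξ with hbb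
  set S : Fin n × Fin n → Set ℝ := fun p =>
    if p.1 = p.2 then ∅ else Set.Icc (bb p.1) (tt p.1) ∩ Set.Icc (bb p.2) (tt p.2) with hS
  set M : Set ℝ := ⋃ p, S p with hM
  have hMc : IsClosed M := by
    apply isClosed_iUnion_of_finite
    intro p
    rcases eq_or_ne p.1 p.2 with h | h
    · simp only [hS, if_pos h]; exact isClosed_empty
    · simp only [hS, if_neg h]; exact isClosed_Icc.inter isClosed_Icc
  have hMne : M.Nonempty := by
    refine ⟨max (bb i₀) (bb i₁), Set.mem_iUnion.2 ⟨(i₀, i₁), ?_⟩⟩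
    obtain ⟨ha, hb, hc, hd'⟩ := hξO
    simp only [hS, if_neg hi01]
    refine ⟨⟨le_max_left _ _, ?_⟩, ⟨le_max_right _ _, ?_⟩⟩
    · exact max_le (le_of_lt ha) (le_of_lt hc)
    · exact max_le (le_of_lt hb) (le_of_lt hd')
  haveI : Nonempty (Fin n) := ⟨i₀⟩
  have hMbdd : BddAbove M := by
    refine ⟨Finset.univ.sup' Finset.univ_nonempty tt, ?_⟩
    intro l hl
    obtain ⟨p, hp⟩ := Set.mem_iUnion.1 hl
    rcases eq_or_ne p.1 p.2 with h | h
    · simp only [hS, if_pos h] at hp; exact absurd hp (Set.notMem_empty _)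
    · simp only [hS, if_neg h] at hp
      exact le_trans hp.1.2 (Finset.le_sup' tt (Finset.mem_univ p.1))
  set u : ℝ := sSup M with hu
  have huM : u ∈ M := hMc.csSup_mem hMne hMbdd
  obtain ⟨p, hp⟩ := Set.mem_iUnion.1 huM
  have hpne : p.1 ≠ p.2 := by
    intro h
    simp only [hS, if_pos h] at hp
    exact absurd hp (Set.notMem_empty _)
  simp only [hS, if_neg hpne] at hp
  obtain ⟨⟨hb1, ht1⟩, hb2, ht2⟩ := hp
  -- the hyperplane at level u meets exactly the bodies p.1 and p.2
  have hexact : ∀ k, bb k ≤ u → u ≤ tt k → k = p.1 ∨ k = p.2 := by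
    intro k hbk htk
    by_contra hcon
    push_neg at hcon
    obtain ⟨hki, hkj⟩ := hcon
    have key : ∃ a b : Fin n, a ≠ b ∧ u < tt a ∧ u < tt b ∧ bb a ≤ u ∧ bb b ≤ u := by
      by_cases h1 : tt p.1 = u
      · refine ⟨p.2, k, fun h => hkj h.symm, ?_, ?_, hb2, hbk⟩
        · rcases lt_or_eq_of_le ht2 with h' | h'
          · exact h'
          · exact absurd (h'.symm.trans h1.symm) (htie p.2 p.1 hpne.symm)
        · rcases lt_or_eq_of_le htk with h' | h'
          · exact h'
          · exact absurd (h'.symm.trans h1.symm) (htie k p.1 hki)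
      · have h1' : u < tt p.1 := lt_of_le_of_ne ht1 (Ne.symm h1)
        by_cases h2 : tt p.2 = u
        · refine ⟨p.1, k, fun h => hki h.symm, h1', ?_, hb1, hbk⟩
          rcases lt_or_eq_of_le htk with h' | h'
          · exact h'
          · exact absurd (h'.symm.trans h2.symm) (htie k p.2 hkj)
        · exact ⟨p.1, p.2, hpne, h1', lt_of_le_of_ne ht2 (Ne.symm h2), hb1, hb2⟩
    obtain ⟨a, b, hab, hta, htb, hba, hbb2⟩ := key
    have hlt : u < min (tt a) (tt b) := lt_min hta htb
    have hmem : min (tt a) (tt b) ∈ M := by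
      refine Set.mem_iUnion.2 ⟨(a, b), ?_⟩
      simp only [hS, if_neg hab]
      exact ⟨⟨le_trans hba (le_of_lt hlt), min_le_left _ _⟩,
        ⟨le_trans hbb2 (le_of_lt hlt), min_le_right _ _⟩⟩
    have := le_csSup hMbdd hmem
    rw [← hu] at this
    linarith
  have hmeets : ∀ k : Fin n, bb k ≤ u → u ≤ tt k → ∃ z ∈ K k, ⟪ξ, z⟫ = u := by
    intro k h1 h2
    have hcont : Continuous (fun z : EuclideanSpace ℝ (Fin d) => ⟪ξ, z⟫) :=
      continuous_const.inner continuous_id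
    have hpre : IsPreconnected ((fun z : EuclideanSpace ℝ (Fin d) => ⟪ξ, z⟫) '' K k) :=
      ((hsc k).convex.isPreconnected).image _ hcont.continuousOn
    have hbmem : bb k ∈ (fun z : EuclideanSpace ℝ (Fin d) => ⟪ξ, z⟫) '' K k := by
      obtain ⟨z, hz, hzv⟩ := exists_sval_eq (hcpt k) (hne k) (-ξ)
      refine ⟨z, hz, ?_⟩
      simp only [hbb, hbv]
      rw [hzv, inner_neg_left]
      ring
    have htmem : tt k ∈ (fun z : EuclideanSpace ℝ (Fin d) => ⟪ξ, z⟫) '' K k := by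
      obtain ⟨z, hz, hzv⟩ := exists_sval_eq (hcpt k) (hne k) ξ
      exact ⟨z, hz, hzv.symm⟩
    have hsub := hpre.Icc_subset hbmem htmem
    obtain ⟨z, hz, hzv⟩ := hsub ⟨h1, h2⟩
    exact ⟨z, hz, hzv⟩
  -- the hyperplane and the two slices
  set H : Set (EuclideanSpace ℝ (Fin d)) := {z | ⟪ξ, z⟫ = u} with hH
  have hHclosed : IsClosed H :=
    isClosed_eq (continuous_const.inner continuous_id) continuous_const
  have hHconv : Convex ℝ H := by
    have hlin : IsLinearMap ℝ (fun z : EuclideanSpace ℝ (Fin d) => ⟪ξ, z⟫) :=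
      ⟨fun a b => inner_add_right ξ a b, fun c a => real_inner_smul_right ξ a c⟩
    exact convex_hyperplane hlin u
  set SA : Set (EuclideanSpace ℝ (Fin d)) := K p.1 ∩ H with hSA
  set SB : Set (EuclideanSpace ℝ (Fin d)) := K p.2 ∩ H with hSB
  have hSAcpt : IsCompact SA := (hcpt p.1).inter_right hHclosed
  have hSBcpt : IsCompact SB := (hcpt p.2).inter_right hHclosed
  have hSAne : SA.Nonempty := by
    obtain ⟨z, hz, hzv⟩ := hmeets p.1 hb1 ht1
    exact ⟨z, hz, hzv⟩
  have hSBne : SB.Nonempty := by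
    obtain ⟨z, hz, hzv⟩ := hmeets p.2 hb2 ht2
    exact ⟨z, hz, hzv⟩
  have hSdisj : Disjoint SA SB :=
    (hdisj hpne).mono Set.inter_subset_left Set.inter_subset_left
  have hSAconv : Convex ℝ SA := ((hsc p.1).convex).inter hHconv
  have hSBconv : Convex ℝ SB := ((hsc p.2).convex).inter hHconv
  -- the orthogonal complement of ξ is connected away from 0
  set C : Set (EuclideanSpace ℝ (Fin d)) := {w | ⟪ξ, w⟫ = 0 ∧ w ≠ 0} with hC
  have hCpre : IsPreconnected C := by
    set Eo := (ℝ ∙ ξ)ᗮ with hEo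
    have hfr : Module.finrank ℝ Eo = d - 1 := by
      have h1 := Submodule.finrank_add_finrank_orthogonal (K := (ℝ ∙ ξ))
      rw [finrank_euclideanSpace_fin, finrank_span_singleton hξ0] at h1
      rw [hEo]
      omega
    have hrank : 1 < Module.rank ℝ Eo := by
      have h2 : (1 : Cardinal) < (Module.finrank ℝ Eo : Cardinal) := by
        rw [hfr]
        exact_mod_cast (by omega : 1 < d - 1)
      rwa [Module.finrank_eq_rank] at h2
    have hpc : IsPathConnected ({(0 : Eo)}ᶜ : Set Eo) :=
      isPathConnected_compl_singleton_of_one_lt_rank hrank 0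
    have hpc2 : IsPathConnected ((Subtype.val : Eo → EuclideanSpace ℝ (Fin d)) ''
        ({(0 : Eo)}ᶜ : Set Eo)) := hpc.image continuous_subtype_val
    have hCeq : ((Subtype.val : Eo → EuclideanSpace ℝ (Fin d)) ''
        ({(0 : Eo)}ᶜ : Set Eo)) = C := by
      ext w
      constructor
      · rintro ⟨w', hw', rfl⟩
        refine ⟨Submodule.mem_orthogonal_singleton_iff_inner_right.1 w'.2, ?_⟩
        intro h0
        apply hw'
        simp only [Set.mem_singleton_iff]
        exact Subtype.ext h0
      · rintro ⟨h1, h2⟩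
        refine ⟨⟨w, Submodule.mem_orthogonal_singleton_iff_inner_right.2 h1⟩, ?_, rfl⟩
        simp only [Set.mem_compl_iff, Set.mem_singleton_iff]
        intro h0
        exact h2 (congrArg Subtype.val h0)
    rw [hCeq] at hpc2
    exact hpc2.isConnected.isPreconnected
  -- separate the two slices
  obtain ⟨f, u', v', hfa, huv, hfb⟩ :=
    geometric_hahn_banach_compact_closed hSAconv hSAcpt hSBconv hSBcpt.isClosed hSdisj
  set z := (InnerProductSpace.toDual ℝ (EuclideanSpace ℝ (Fin d))).symm f with hzdef
  have hzf : ∀ x : EuclideanSpace ℝ (Fin d), ⟪z, x⟫ = f x := fun x =>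
    InnerProductSpace.toDual_symm_apply
  have hinner_ne : ⟪ξ, ξ⟫ ≠ (0 : ℝ) := inner_self_ne_zero.2 hξ0
  set κ : ℝ := ⟪ξ, z⟫ / ⟪ξ, ξ⟫ with hκ
  set w₀ := z - κ • ξ with hw₀
  have hw₀ξ : ⟪ξ, w₀⟫ = 0 := by
    rw [hw₀, inner_sub_right, real_inner_smul_right, hκ,
      div_mul_cancel₀ _ hinner_ne, sub_self]
  have hw₀x : ∀ x₂ : EuclideanSpace ℝ (Fin d), ⟪ξ, x₂⟫ = u → ⟪w₀, x₂⟫ = f x₂ - κ * u := by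
    intro x₂ hx₂
    rw [hw₀, inner_sub_left, real_inner_smul_left, hzf, hx₂]
  obtain ⟨aH, haH⟩ := id hSAne
  obtain ⟨bH, hbH⟩ := id hSBne
  have hfaH : f aH < u' := hfa aH haH
  have hfbH : v' < f bH := hfb bH hbH
  have hw₀ne : w₀ ≠ 0 := by
    intro h0
    have ha' := hw₀x aH haH.2
    have hb' := hw₀x bH hbH.2
    rw [h0, inner_zero_left] at ha' hb'
    linarith
  have hSAle : sval SA w₀ ≤ u' - κ * u := by
    apply sval_le hSAcpt hSAne
    intro x₂ hx₂
    rw [hw₀x x₂ hx₂.2]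
    have := hfa x₂ hx₂
    linarith
  have hSBgt : v' - κ * u < sval SB w₀ := by
    have h1 := le_sval hSBcpt hSBne (w := w₀) hbH
    rw [hw₀x bH hbH.2] at h1
    linarith
  have hw₀neg : ∀ x₂ : EuclideanSpace ℝ (Fin d), ⟪ξ, x₂⟫ = u → ⟪-w₀, x₂⟫ = κ * u - f x₂ := by
    intro x₂ hx₂
    rw [inner_neg_left, hw₀x x₂ hx₂]
    ring
  have hSBle : sval SB (-w₀) ≤ κ * u - v' := by
    apply sval_le hSBcpt hSBne
    intro x₂ hx₂
    rw [hw₀neg x₂ hx₂.2]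
    have := hfb x₂ hx₂
    linarith
  have hSAgt : κ * u - u' < sval SA (-w₀) := by
    have h1 := le_sval hSAcpt hSAne (w := -w₀) haH
    rw [hw₀neg aH haH.2] at h1
    linarith
  have hw₀C : w₀ ∈ C := ⟨hw₀ξ, hw₀ne⟩
  have hw₀C' : -w₀ ∈ C := ⟨by rw [inner_neg_right, hw₀ξ, neg_zero], neg_ne_zero.2 hw₀ne⟩
  obtain ⟨ws, hwsC, hwseq⟩ := hCpre.intermediate_value₂ hw₀C hw₀C'
    ((sval_continuous hSAcpt hSAne).continuousOn)
    ((sval_continuous hSBcpt hSBne).continuousOn)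
    (by linarith) (by linarith)
  obtain ⟨hwsξ, hws0⟩ := hwsC
  obtain ⟨pA, hpA, hpAv⟩ := exists_sval_eq hSAcpt hSAne ws
  obtain ⟨pB, hpB, hpBv⟩ := exists_sval_eq hSBcpt hSBne ws
  have hpAK : pA ∈ K p.1 := hpA.1
  have hpAH : ⟪ξ, pA⟫ = u := hpA.2
  have hpBK : pB ∈ K p.2 := hpB.1
  have hpBH : ⟪ξ, pB⟫ = u := hpB.2
  set sstar : ℝ := sval SA ws with hsstar
  have hpAval : ⟪ws, pA⟫ = sstar := hpAv.symm
  have hpBval : ⟪ws, pB⟫ = sstar := by rw [hwseq]; exact hpBv.symm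
  have hABne : pA ≠ pB := by
    intro h
    exact Set.disjoint_left.1 (hdisj hpne) hpA.1 (h ▸ hpB.1)
  have hmaxA : ∀ z₂ ∈ K p.1, ⟪ξ, z₂⟫ = u → ⟪ws, z₂⟫ ≤ sstar := by
    intro z₂ hz₂ hz₂u
    exact le_sval hSAcpt hSAne ⟨hz₂, hz₂u⟩
  have hmaxB : ∀ z₂ ∈ K p.2, ⟪ξ, z₂⟫ = u → ⟪ws, z₂⟫ ≤ sstar := by
    intro z₂ hz₂ hz₂u
    rw [hwseq]
    exact le_sval hSBcpt hSBne ⟨hz₂, hz₂u⟩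
  refine ⟨line[ℝ, pA, pB], ?_, pA, pB, hABne, ?_⟩
  · show Module.finrank ℝ (affineSpan ℝ ({pA, pB} : Set (EuclideanSpace ℝ (Fin d)))).direction = 1
    rw [direction_affineSpan, vectorSpan_pair]
    apply finrank_span_singleton
    rw [vsub_eq_sub]
    exact sub_ne_zero.2 hABne
  · apply Set.eq_of_subset_of_subset
    · rintro x₂ ⟨hxL, hxU⟩
      obtain ⟨k, hk⟩ := Set.mem_iUnion.1 hxU
      have hxL' : x₂ ∈ line[ℝ, pA, pB] := hxL
      have hdir : x₂ -ᵥ pA ∈ (affineSpan ℝ ({pA, pB} : Set (EuclideanSpace ℝ (Fin d)))).direction :=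
        (AffineSubspace.vsub_right_mem_direction_iff_mem
          (left_mem_affineSpan_pair ℝ pA pB) x₂).2 hxL'
      rw [direction_affineSpan, vectorSpan_pair] at hdir
      obtain ⟨r, hr⟩ := Submodule.mem_span_singleton.1 hdir
      have hrr : x₂ = pA + r • (pA - pB) := by
        rw [vsub_eq_sub, vsub_eq_sub] at hr
        rw [hr]
        abel
      have hxve : ⟪ξ, x₂⟫ = u := by
        rw [hrr, inner_add_right, real_inner_smul_right, inner_sub_right,
          hpAH, hpBH, sub_self, mul_zero, add_zero]
      have hxws : ⟪ws, x₂⟫ = sstar := by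
        rw [hrr, inner_add_right, real_inner_smul_right, inner_sub_right,
          hpAval, hpBval, sub_self, mul_zero, add_zero]
      have hbk : bb k ≤ u := by
        have h := (hkey k ξ hk).1
        rw [hxve] at h
        exact h
      have htk : u ≤ tt k := by
        have h := (hkey k ξ hk).2
        rw [hxve] at h
        exact h
      rcases hexact k hbk htk with hkp | hkp
      · rw [hkp] at hk
        have hxeq : x₂ = pA :=
          unique_max_slice (hsc p.1) hws0 hwsξ hk hpAK hxve hpAH hxws hpAval hmaxA
        rw [hxeq]
        exact Set.mem_insert _ _
      · rw [hkp] at hk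
        have hxeq : x₂ = pB :=
          unique_max_slice (hsc p.2) hws0 hwsξ hk hpBK hxve hpBH hxws hpBval hmaxB
        rw [hxeq]
        exact Set.mem_insert_iff.2 (Or.inr rfl)
    · rintro x₂ hx₂
      simp only [Set.mem_insert_iff, Set.mem_singleton_iff] at hx₂
      rcases hx₂ with h | h
      · rw [h]
        exact ⟨left_mem_affineSpan_pair ℝ pA pB, Set.mem_iUnion.2 ⟨p.1, hpAK⟩⟩
      · rw [h]
        exact ⟨right_mem_affineSpan_pair ℝ pA pB, Set.mem_iUnion.2 ⟨p.2, hpBK⟩⟩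
end

section
/- Let S ⊆ ℝ², let a, b ∈ ℝ² with a ≠ b and segment ℝ a b ⊆ S, and let c ∈ S be a point not on the affine line through a and b. Suppose that for any two distinct points p, q ∈ S there exists r ∈ S with r ≠ p, r ≠ q and p, q, r collinear (i.e. no line meets S in exactly two points). Then the set S \ (segment ℝ a b ∪ {c}) is infinite. -/
/-!
Fix a line `L` through two points of `S` and a point `c ∈ S` off `L`. For each `x ∈ S ∩ L`, the
line `cx` contains a third point `r ∈ S`; it cannot lie on `L` (a line through two points of `L`
is `L` itself, which misses `c`), so `r ∉ L ∪ {c}`. Distinct `x` give distinct lines through `c`,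
hence distinct `r`, and `S ∩ L` contains a whole segment, so there are infinitely many such `r`.
-/

open Set

section AffineSpace

variable {k V P : Type*} [Field k] [AddCommGroup V] [Module k V] [AddTorsor V P]

theorem Collinear.mem_affineSubspace_of_mem_of_ne {s : Set P} (h : Collinear k s)
    {L : AffineSubspace k P} {x y z : P} (hxs : x ∈ s) (hys : y ∈ s) (hzs : z ∈ s)
    (hx : x ∈ L) (hy : y ∈ L) (hxy : x ≠ y) : z ∈ L :=
  affineSpan_pair_le_of_mem_of_mem hx hy <| h.mem_affineSpan_of_mem_of_ne hxs hys hzs hxy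

theorem exists_mem_diff_insert_of_forall_exists_collinear {s : Set P} {L : AffineSubspace k P}
    {c x : P} (hcs : c ∈ s) (hcL : c ∉ L) (hxs : x ∈ s) (hxL : x ∈ L)
    (h : ∀ p ∈ s, ∀ q ∈ s, p ≠ q → ∃ r ∈ s, r ≠ p ∧ r ≠ q ∧ Collinear k ({p, q, r} : Set P)) :
    ∃ r ∈ s \ insert c (L : Set P), x ∈ line[k, c, r] := by
  have hcx : c ≠ x := fun hcx => hcL (hcx ▸ hxL)
  obtain ⟨r, hrs, hrc, hrx, hcol⟩ := h c hcs x hxs hcx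
  have hrL : r ∉ L := fun hrL =>
    hcL <| hcol.mem_affineSubspace_of_mem_of_ne (by simp) (by simp) (by simp) hxL hrL hrx.symm
  exact ⟨r, ⟨hrs, by simp [hrc, hrL]⟩,
    hcol.mem_affineSpan_of_mem_of_ne (by simp) (by simp) (by simp) hrc.symm⟩

theorem Set.Infinite.diff_insert_of_forall_exists_collinear {s : Set P}
    {L : AffineSubspace k P} {c : P} (hsL : (s ∩ L).Infinite) (hcs : c ∈ s) (hcL : c ∉ L)
    (h : ∀ p ∈ s, ∀ q ∈ s, p ≠ q → ∃ r ∈ s, r ≠ p ∧ r ≠ q ∧ Collinear k ({p, q, r} : Set P)) :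
    (s \ insert c (L : Set P)).Infinite := by
  choose! f hf hxf using fun x (hx : x ∈ s ∩ L) =>
    exists_mem_diff_insert_of_forall_exists_collinear hcs hcL hx.1 hx.2 h
  have hinj : InjOn f (s ∩ L) := by
    intro x hx y hy hxy
    by_contra hne
    have hcol : Collinear k ({x, y, c} : Set P) :=
      collinear_triple_of_mem_affineSpan_pair (hxy ▸ hxf x hx) (hxf y hy)
        (left_mem_affineSpan_pair k c (f y))
    exact hcL (hcol.mem_affineSubspace_of_mem_of_ne (by simp) (by simp) (by simp) hx.2 hy.2 hne)
  exact infinite_of_injOn_mapsTo hinj hf hsL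

end AffineSpace

section Segment

variable {R V : Type*} [Field R] [LinearOrder R] [IsStrictOrderedRing R] [AddCommGroup V]
  [Module R V]

theorem segment_subset_affineSpan_pair (a b : V) : segment R a b ⊆ line[R, a, b] :=
  fun _ hx => (mem_segment_iff_wbtw.1 hx).mem_affineSpan

theorem segment_infinite {a b : V} (hab : a ≠ b) : (segment R a b).Infinite := by
  rw [segment_eq_image_lineMap]
  exact (Icc_infinite zero_lt_one).image (AffineMap.lineMap_injective R hab).injOn

end Segment

theorem infinite_off_segment (S : Set (EuclideanSpace ℝ (Fin 2)))
    (a b : EuclideanSpace ℝ (Fin 2)) (hab : a ≠ b)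
    (hseg : segment ℝ a b ⊆ S)
    (c : EuclideanSpace ℝ (Fin 2)) (hcS : c ∈ S)
    (hc : c ∉ (affineSpan ℝ ({a, b} : Set (EuclideanSpace ℝ (Fin 2))) :
      Set (EuclideanSpace ℝ (Fin 2))))
    (h : ∀ p ∈ S, ∀ q ∈ S, p ≠ q →
      ∃ r ∈ S, r ≠ p ∧ r ≠ q ∧ Collinear ℝ ({p, q, r} : Set (EuclideanSpace ℝ (Fin 2)))) :
    (S \ (segment ℝ a b ∪ {c})).Infinite := by
  have hline := segment_subset_affineSpan_pair (R := ℝ) a b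
  have hSL : (S ∩ line[ℝ, a, b]).Infinite :=
    (segment_infinite hab).mono (subset_inter hseg hline)
  refine (hSL.diff_insert_of_forall_exists_collinear hcS hc h).mono ?_
  rw [union_singleton]
  exact sdiff_subset_sdiff_right (insert_subset_insert hline)
end
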